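/- arXiv:2011.01835 — 5 statements merged into one kernel-verified Lean document; each statement's English description precedes it below -/
import Mathlib

section
/- Let Λ be a ⋆-approximate lattice in a locally compact second countable group G and let V ⊆ G be any neighbourhood of the identity. Then there is a compact subset K ⊆ G such that VΛK = G. -/
open scoped Pointwise ENNReal NNReal
open MeasureTheory

/-- The space of closed subsets of a topological space. -/
def CFSp (G : Type*) [TopologicalSpace G] := {A : Set G // IsClosed A}

namespace CFSp

variable {G : Type*} [TopologicalSpace G]

/-- The Chabauty–Fell topology on the space of closed subsets. -/
instance : TopologicalSpace (CFSp G) :=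
  TopologicalSpace.generateFrom
    ({s | ∃ K : Set G, IsCompact K ∧ s = {C : CFSp G | C.1 ∩ K = ∅}} ∪
     {s | ∃ V : Set G, IsOpen V ∧ s = {C : CFSp G | (C.1 ∩ V).Nonempty}})

instance : MeasurableSpace (CFSp G) := borel (CFSp G)

instance : BorelSpace (CFSp G) := ⟨rfl⟩

/-- Left translation action of a topological group on its closed subsets. -/
noncomputable instance [Group G] [IsTopologicalGroup G] : SMul G (CFSp G) :=
  ⟨fun g X => ⟨g • X.1, X.2.smul g⟩⟩

/-- Constructor. -/
def mk (A : Set G) (h : IsClosed A) : CFSp G := ⟨A, h⟩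

end CFSp

/-- The extended invariant hull. -/
def extHull {G : Type*} [TopologicalSpace G] [Group G] (X₀ : Set G) : Set (CFSp G) :=
  {X : CFSp G | X.1⁻¹ * X.1 ⊆ closure (X₀⁻¹ * X₀)}

/-- The empty set as a closed subset. -/
def emptyCF (G : Type*) [TopologicalSpace G] : CFSp G := ⟨∅, isClosed_empty⟩

/-- Approximate subgroup. -/
def IsApproxSubgroup {G : Type*} [Group G] (Λ : Set G) : Prop :=
  (1 : G) ∈ Λ ∧ Λ⁻¹ = Λ ∧ ∃ F : Set G, F.Finite ∧ Λ * Λ ⊆ F * Λ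

/-- Uniformly discrete subset: the identity is isolated in X⁻¹X. -/
def UniformlyDiscrete {G : Type*} [TopologicalSpace G] [Group G] (X : Set G) : Prop :=
  ∃ V ∈ nhds (1 : G), V ∩ (X⁻¹ * X) ⊆ {1}

/-- A proper `G`-invariant Borel probability measure concentrated on `Ω ⊆ 𝒞(G)`. -/
def IsInvariantProperProb {G : Type*} [TopologicalSpace G] [Group G] [IsTopologicalGroup G]
    (Ω : Set (CFSp G)) (ν : Measure (CFSp G)) : Prop :=
  IsProbabilityMeasure ν ∧ ν Ωᶜ = 0 ∧ ν {emptyCF G} = 0 ∧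
    ∀ g : G, Measure.map (fun X : CFSp G => g • X) ν = ν

/-- ⋆-approximate lattice. -/
def IsStarApproxLattice {G : Type*} [TopologicalSpace G] [Group G] [IsTopologicalGroup G]
    (Λ : Set G) : Prop :=
  IsApproxSubgroup Λ ∧ UniformlyDiscrete Λ ∧
    ∃ ν : Measure (CFSp G), IsInvariantProperProb (extHull Λ) ν

/-- Ergodicity of a measure on `𝒞(G)` under the translation action. -/
def ErgodicMeas {G : Type*} [TopologicalSpace G] [Group G] [IsTopologicalGroup G]
    (ν : Measure (CFSp G)) : Prop :=
  ∀ s : Set (CFSp G), MeasurableSet s → (∀ g : G, (fun X : CFSp G => g • X) ⁻¹' s = s) →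
    ν s = 0 ∨ ν sᶜ = 0

/-- Commensurability of subsets of a group. -/
def AreCommensurable {G : Type*} [Group G] (X Y : Set G) : Prop :=
  ∃ F : Set G, F.Finite ∧ X ⊆ F * Y ∧ Y ⊆ F * X

/-- Finite local complexity: `X⁻¹X` is locally finite. -/
def FiniteLocalComplexity {G : Type*} [TopologicalSpace G] [Group G] (X : Set G) : Prop :=
  ∀ K : Set G, IsCompact K → ((X⁻¹ * X) ∩ K).Finite

/-!
Fix an open `U ∋ 1` and write `W a` for the set of closed sets meeting `aU`. By invariance
`ν (W a)` does not depend on `a`, and it is positive since countably many `W a` cover all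
nonempty closed sets. As ν is finite, a maximal family `A` of points whose `W a` pairwise meet in
ν-null sets is finite. By maximality, for every `g` some `X` in the extended hull meets both `aU`
and `gU` for an `a ∈ A`, which puts `a⁻¹g` in `U cl(Λ⁻¹Λ) U⁻¹`; so `G = A U cl(Λ⁻¹Λ) U⁻¹`.
Finally `cl(Λ⁻¹Λ) ⊆ Λ⁻¹Λ U⁻¹ ⊆ Λ F⁻¹ U⁻¹` when `Λ² ⊆ FΛ`, and inverting gives
`G = U Λ (F⁻¹ U⁻¹ U⁻¹ A⁻¹)`.
-/

open Set

namespace CFSp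

variable {G : Type*} [TopologicalSpace G]

def hitting (U : Set G) : Set (CFSp G) := {X | (X.1 ∩ U).Nonempty}

lemma isOpen_hitting {U : Set G} (hU : IsOpen U) : IsOpen (hitting U) :=
  TopologicalSpace.GenerateOpen.basic _ (Or.inr ⟨U, hU, rfl⟩)

lemma isOpen_compl_hitting {K : Set G} (hK : IsCompact K) : IsOpen (hitting K)ᶜ :=
  TopologicalSpace.GenerateOpen.basic _
    (Or.inl ⟨K, hK, by ext; simp [hitting, not_nonempty_iff_eq_empty]⟩)

variable [Group G] [IsTopologicalGroup G]

lemma preimage_smul_hitting (g : G) (U : Set G) :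
    (g • ·) ⁻¹' hitting U = (hitting (g⁻¹ • U) : Set (CFSp G)) := by
  ext X
  change (g • X.1 ∩ U).Nonempty ↔ (X.1 ∩ g⁻¹ • U).Nonempty
  conv_lhs => rw [← smul_inv_smul g U, ← smul_set_inter, smul_set_nonempty]

lemma continuous_const_smul (g : G) : Continuous (fun X : CFSp G => g • X) := by
  refine continuous_generateFrom_iff.2 ?_
  rintro _ (⟨K, hK, rfl⟩ | ⟨U, hU, rfl⟩)
  · have hmiss : {C : CFSp G | C.1 ∩ K = ∅} = (hitting K)ᶜ := by
      ext; simp [hitting, not_nonempty_iff_eq_empty]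
    rw [hmiss, preimage_compl, preimage_smul_hitting]
    exact isOpen_compl_hitting (hK.smul g⁻¹)
  · exact preimage_smul_hitting g U ▸ isOpen_hitting (hU.smul g⁻¹)

end CFSp

open CFSp MeasureTheory TopologicalSpace Function

theorem MeasureTheory.card_mul_le_measure_univ {α ι : Type*} [MeasurableSpace α]
    {μ : Measure α} {W : ι → Set α} (hW : ∀ i, NullMeasurableSet (W i) μ) {c : ℝ≥0∞}
    (hcW : ∀ i, c ≤ μ (W i)) {A : Finset ι} (hA : (A : Set ι).Pairwise (AEDisjoint μ on W)) :
    A.card * c ≤ μ univ :=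
  calc A.card * c = ∑ _ ∈ A, c := by rw [Finset.sum_const, nsmul_eq_mul]
    _ ≤ ∑ a ∈ A, μ (W a) := Finset.sum_le_sum fun a _ => hcW a
    _ = μ (⋃ a ∈ A, W a) := (measure_biUnion_finset₀ hA fun a _ => hW a).symm
    _ ≤ μ univ := measure_mono (subset_univ _)

theorem MeasureTheory.exists_finset_forall_measure_inter_ne_zero {α ι : Type*}
    [MeasurableSpace α] {μ : Measure α} [IsFiniteMeasure μ] {W : ι → Set α}
    (hW : ∀ i, NullMeasurableSet (W i) μ) {c : ℝ≥0∞} (hc : c ≠ 0) (hcW : ∀ i, c ≤ μ (W i)) :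
    ∃ A : Finset ι, ∀ i, ∃ a ∈ A, μ (W a ∩ W i) ≠ 0 := by
  classical
  by_contra! hmax
  have hfamily : ∀ n : ℕ, ∃ A : Finset ι,
      A.card = n ∧ (A : Set ι).Pairwise (AEDisjoint μ on W) := by
    intro n
    induction n with
    | zero => exact ⟨∅, rfl, by simp⟩
    | succ n ih =>
      obtain ⟨A, hcard, hA⟩ := ih
      obtain ⟨i, hi⟩ := hmax A
      have hiA : i ∉ A := fun h => hc (le_zero_iff.1 ((hcW i).trans_eq (by simpa using hi i h)))
      refine ⟨insert i A, by rw [Finset.card_insert_of_notMem hiA, hcard], ?_⟩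
      rw [Finset.coe_insert, pairwise_insert]
      exact ⟨hA, fun b hb _ => ⟨AEDisjoint.symm (hi b hb), hi b hb⟩⟩
  obtain ⟨N, hN⟩ := ENNReal.exists_nat_mul_gt hc (measure_ne_top μ univ)
  obtain ⟨A, hcard, hA⟩ := hfamily N
  exact (card_mul_le_measure_univ hW hcW hA).not_gt (hcard ▸ hN)

theorem inv_mul_mem_of_inter_smul_nonempty {G : Type*} [Group G] {X S U : Set G} {a b : G}
    (hX : X⁻¹ * X ⊆ S) (ha : (X ∩ a • U).Nonempty) (hb : (X ∩ b • U).Nonempty) :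
    a⁻¹ * b ∈ U * S * U⁻¹ := by
  obtain ⟨_, hx, u, hu, rfl⟩ := ha
  obtain ⟨_, hy, w, hw, rfl⟩ := hb
  refine ⟨_, mul_mem_mul hu (hX (mul_mem_mul (inv_mem_inv.2 hx) hy)), w⁻¹, inv_mem_inv.2 hw, ?_⟩
  simp only [smul_eq_mul]
  group

section Translates

variable {G : Type*} [Group G] [TopologicalSpace G] [IsTopologicalGroup G]
  {ν : Measure (CFSp G)}

lemma CFSp.measure_hitting_smul (hν : ∀ g : G, ν.map (g • ·) = ν) (g : G) {U : Set G}
    (hU : IsOpen U) : ν (hitting (g • U)) = ν (hitting U) := by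
  conv_rhs => rw [← hν g⁻¹]
  rw [Measure.map_apply (CFSp.continuous_const_smul _).measurable
    (isOpen_hitting hU).measurableSet, preimage_smul_hitting, inv_inv]

lemma CFSp.measure_hitting_ne_zero [SeparableSpace G] [NeZero ν]
    (hinv : ∀ g : G, ν.map (g • ·) = ν) (hempty : ν {emptyCF G} = 0) {U : Set G}
    (hU : IsOpen U) (hne : U.Nonempty) : ν (hitting U) ≠ 0 := by
  intro h0
  obtain ⟨D, hDc, hD⟩ := exists_countable_dense G
  have hcover : ({emptyCF G}ᶜ : Set (CFSp G)) ⊆ ⋃ d ∈ D, hitting (d • U) := by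
    intro X hX
    obtain ⟨x, hx⟩ := nonempty_iff_ne_empty.2 fun h => hX (Subtype.ext h)
    obtain ⟨d, hdD, u, hu, rfl⟩ :=
      hD.exists_mem_open (hU.inv.smul x) (by simpa [smul_set_nonempty] using hne)
    exact mem_biUnion hdD ⟨x, hx, u⁻¹, hu, by simp [smul_eq_mul]⟩
  have hcompl : ν {emptyCF G}ᶜ = 0 := measure_mono_null hcover <|
    (measure_biUnion_null_iff hDc).2 fun d _ => (measure_hitting_smul hinv d hU).trans h0
  have huniv : ν univ = 0 := by
    rw [← union_compl_self {emptyCF G}]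
    exact measure_union_null hempty hcompl
  exact NeZero.ne (ν univ) huniv

theorem exists_finset_mul_eq_univ [SeparableSpace G] {X : Set G}
    (hν : IsInvariantProperProb (extHull X) ν) {U : Set G} (hU : IsOpen U) (hne : U.Nonempty) :
    ∃ A : Finset G, (A : Set G) * (U * closure (X⁻¹ * X) * U⁻¹) = univ := by
  have := hν.1
  obtain ⟨A, hA⟩ := exists_finset_forall_measure_inter_ne_zero
    (W := fun a : G => hitting (a • U)) (μ := ν)
    (fun a => (isOpen_hitting (hU.smul a)).measurableSet.nullMeasurableSet)
    (measure_hitting_ne_zero hν.2.2.2 hν.2.2.1 hU hne)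
    (fun a => (measure_hitting_smul hν.2.2.2 a hU).ge)
  refine ⟨A, eq_univ_of_forall fun g => ?_⟩
  obtain ⟨a, haA, hag⟩ := hA g
  rw [← measure_inter_conull hν.2.1] at hag
  obtain ⟨Y, ⟨hYa, hYg⟩, hY⟩ := nonempty_of_measure_ne_zero hag
  exact ⟨a, haA, _, inv_mul_mem_of_inter_smul_nonempty hY hYa hYg, mul_inv_cancel_left a g⟩

end Translates

theorem closure_subset_mul_of_mem_nhds_one {G : Type*} [Group G] [TopologicalSpace G]
    [IsTopologicalGroup G] (S : Set G) {W : Set G} (hW : W ∈ nhds (1 : G)) :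
    closure S ⊆ S * W :=
  (closure_subset_mul_right_of_mem_nhds_one_of_inv S
    (Filter.inter_mem hW (inv_mem_nhds_one G hW)) fun _ hx => ⟨hx.2, by simpa using hx.1⟩).trans
    (mul_subset_mul_left inter_subset_left)

theorem inv_mul_subset_mul_inv_of_mul_subset {G : Type*} [Group G] {Λ F : Set G}
    (hsymm : Λ⁻¹ = Λ) (h : Λ * Λ ⊆ F * Λ) : Λ⁻¹ * Λ ⊆ Λ * F⁻¹ :=
  calc Λ⁻¹ * Λ = (Λ * Λ)⁻¹ := by rw [mul_inv_rev, hsymm]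
    _ ⊆ (F * Λ)⁻¹ := inv_subset_inv.2 h
    _ = Λ * F⁻¹ := by rw [mul_inv_rev, hsymm]

/-- A ⋆-approximate lattice `Λ` in a locally compact second countable group `G` is
"bi-syndetic": for every neighbourhood `V` of the identity there is a compact `K` with
`VΛK = G`. -/
theorem statement2 {G : Type*} [Group G] [TopologicalSpace G] [IsTopologicalGroup G]
    [LocallyCompactSpace G] [SecondCountableTopology G]
    (Λ : Set G) (hΛ : IsStarApproxLattice Λ) (V : Set G) (hV : V ∈ nhds (1 : G)) :
    ∃ K : Set G, IsCompact K ∧ V * Λ * K = Set.univ := by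
  obtain ⟨⟨-, hsymm, F, hF, hΛΛ⟩, -, ν, hν⟩ := hΛ
  obtain ⟨s, hs, hsV, hsc⟩ := local_compact_nhds hV
  set U := interior s
  have hU : U ∈ nhds (1 : G) := interior_mem_nhds.2 hs
  obtain ⟨A, hA⟩ := exists_finset_mul_eq_univ hν isOpen_interior ⟨1, mem_of_mem_nhds hU⟩
  refine ⟨F⁻¹ * s⁻¹ * s⁻¹ * (A : Set G)⁻¹,
    ((hF.inv.isCompact.mul hsc.inv).mul hsc.inv).mul A.finite_toSet.inv.isCompact, ?_⟩
  have hQ : closure (Λ⁻¹ * Λ) ⊆ Λ * F⁻¹ * U⁻¹ :=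
    (closure_subset_mul_of_mem_nhds_one _ (inv_mem_nhds_one G hU)).trans
      (mul_subset_mul_right (inv_mul_subset_mul_inv_of_mul_subset hsymm hΛΛ))
  have hQsymm : (closure (Λ⁻¹ * Λ))⁻¹ = closure (Λ⁻¹ * Λ) := by
    rw [inv_closure, mul_inv_rev, inv_inv]
  refine univ_subset_iff.1 ?_
  calc univ = (A * (U * closure (Λ⁻¹ * Λ) * U⁻¹) : Set G)⁻¹ := by rw [hA, inv_univ]
    _ = U * closure (Λ⁻¹ * Λ) * U⁻¹ * (A : Set G)⁻¹ := by
      simp only [mul_inv_rev, inv_inv, hQsymm, mul_assoc]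
    _ ⊆ U * (Λ * F⁻¹ * U⁻¹) * U⁻¹ * (A : Set G)⁻¹ := by gcongr
    _ = U * Λ * (F⁻¹ * U⁻¹ * U⁻¹ * (A : Set G)⁻¹) := by simp only [mul_assoc]
    _ ⊆ V * Λ * (F⁻¹ * s⁻¹ * s⁻¹ * (A : Set G)⁻¹) := by
      gcongr
      exacts [interior_subset.trans hsV, inv_subset_inv.2 interior_subset,
        inv_subset_inv.2 interior_subset]
end

section
/- Let Λ be a ⋆-approximate lattice in a locally compact second countable group G. Then there is a Borel subset B ⊆ G with finite Haar measure such that BΛ² = G and B⁻¹B ∩ Λ² = {e}. -/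
open scoped Pointwise ENNReal NNReal
open MeasureTheory

/-!
For a closed set `X` in the hull of `Λ`, counting the points of `X` is a measure on `G`, and
averaging it against the invariant measure `ν` gives the periodization
`m(A) = ∫ #(X ∩ A) dν(X)`. It is left invariant, finite on compacts (the hull condition
`X⁻¹X ⊆ closure (Λ⁻¹Λ)` and finite local complexity bound the count on a compact set) and nonzero
(`ν`-almost every `X` is nonempty), hence a Haar measure and a multiple of `μ`. A greedy exhaustion
of `G` by small translates produces a Borel set `B` with `BΛ² = G` whose points are pairwise
`Λ²`-separated; every `X` in the hull meets such a `B` at most once, so `m(B) ≤ 1` and `μ(B) < ∞`.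

Points are counted up to topological inseparability, since Borel sets of a non-Hausdorff group
cannot separate inseparable points.
-/

open Set Function Topology TopologicalSpace SeparationQuotient

section ClassCount

variable {X : Type*} [TopologicalSpace X] [MeasurableSpace X] [BorelSpace X]

noncomputable def classCount (S : Set X) : Measure X :=
  Measure.sum fun q : mk '' S => Measure.dirac (surjInv surjective_mk (q : SeparationQuotient X))

lemma classCount_apply (S : Set X) {A : Set X} (hA : MeasurableSet A) :
    classCount S A = (mk '' (S ∩ A)).encard := by
  set rep := surjInv (surjective_mk (X := X))
  have hrep : mk '' S ∩ rep ⁻¹' A = mk '' (S ∩ A) := by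
    ext q
    constructor
    · rintro ⟨⟨x, hxS, rfl⟩, hxA⟩
      have hx : Inseparable (rep (mk x)) x := mk_eq_mk.1 (surjInv_eq _ _)
      exact ⟨x, ⟨hxS, (hx.mem_measurableSet_iff hA).1 hxA⟩, rfl⟩
    · rintro ⟨x, ⟨hxS, hxA⟩, rfl⟩
      have hx : Inseparable (rep (mk x)) x := mk_eq_mk.1 (surjInv_eq _ _)
      exact ⟨⟨x, hxS, rfl⟩, (hx.mem_measurableSet_iff hA).2 hxA⟩
  simp only [classCount, Measure.sum_apply _ hA, Measure.dirac_apply' _ hA]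
  rw [← hrep, ← ENNReal.tsum_set_one, tsum_subtype (mk '' S ∩ rep ⁻¹' A) fun _ => 1,
    ← indicator_indicator, ← tsum_subtype]
  rfl

end ClassCount

theorem Set.Countable.of_finite_inter_isCompact {X : Type*} [TopologicalSpace X]
    [SigmaCompactSpace X] {D : Set X} (hD : ∀ K, IsCompact K → (D ∩ K).Finite) : D.Countable := by
  rw [← inter_univ D, ← iUnion_compactCovering, inter_iUnion]
  exact countable_iUnion fun n => (hD _ (isCompact_compactCovering X n)).countable

theorem exists_inseparable_of_mem_closure_of_finite_inter_isCompact {X : Type*}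
    [TopologicalSpace X] [R1Space X] [WeaklyLocallyCompactSpace X] {D : Set X}
    (hD : ∀ K, IsCompact K → (D ∩ K).Finite) {z : X} (hz : z ∈ closure D) :
    ∃ d ∈ D, Inseparable z d := by
  have hlf : LocallyFinite fun d : D => ({(d : X)} : Set X) := by
    intro x
    obtain ⟨K, hK, hKx⟩ := exists_compact_mem_nhds x
    refine ⟨K, hKx, ((hD K hK).preimage Subtype.val_injective.injOn).subset ?_⟩
    rintro d ⟨_, rfl, hdK⟩
    exact ⟨d.2, hdK⟩
  rw [← biUnion_of_singleton D, biUnion_eq_iUnion, hlf.closure_iUnion] at hz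
  obtain ⟨d, hd⟩ := mem_iUnion.1 hz
  exact ⟨d, d.2, (specializes_iff_inseparable.1 (specializes_iff_mem_closure.2 hd)).symm⟩

section UniformlyDiscrete

variable {G : Type*} [Group G] [TopologicalSpace G] [IsTopologicalGroup G]

theorem exists_isOpen_one_mem_inv_mul_subset {V : Set G} (hV : V ∈ 𝓝 (1 : G)) :
    ∃ W : Set G, IsOpen W ∧ (1 : G) ∈ W ∧ W⁻¹ * W ⊆ V := by
  have hcont : Filter.Tendsto (fun p : G × G => p.1⁻¹ * p.2) (𝓝 1 ×ˢ 𝓝 1) (𝓝 1) := by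
    rw [← nhds_prod_eq]
    exact (continuous_fst.inv.mul continuous_snd).tendsto' _ _ (by simp)
  obtain ⟨W, hW, hWV⟩ := Filter.mem_prod_self_iff.1 (hcont hV)
  refine ⟨interior W, isOpen_interior, mem_interior_iff_mem_nhds.2 hW, ?_⟩
  rintro _ ⟨a, ha, b, hb, rfl⟩
  have h := hWV (mk_mem_prod (interior_subset (mem_inv.1 ha)) (interior_subset hb))
  rwa [mem_preimage, inv_inv] at h

theorem UniformlyDiscrete.finite_inter_isCompact {S K : Set G} (hS : UniformlyDiscrete S)
    (hK : IsCompact K) : (S ∩ K).Finite := by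
  obtain ⟨V, hV, hVS⟩ := hS
  obtain ⟨W, hWo, hW1, hWV⟩ := exists_isOpen_one_mem_inv_mul_subset hV
  obtain ⟨t, ht⟩ := compact_covered_by_mul_left_translates hK
    (by rw [hWo.interior_eq]; exact ⟨1, hW1⟩)
  refine (t.finite_toSet.biUnion fun g _ => Subsingleton.finite (s := S ∩ (g * ·) ⁻¹' W) ?_).subset
    fun x hx => ?_
  · rintro x ⟨hxS, hxW⟩ y ⟨hyS, hyW⟩
    have hV : x⁻¹ * y ∈ V := by
      simpa [mul_assoc] using
        hWV (mul_mem_mul (inv_mem_inv.2 (show g * x ∈ W from hxW)) (show g * y ∈ W from hyW))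
    exact inv_mul_eq_one.1 (hVS ⟨hV, mul_mem_mul (inv_mem_inv.2 hxS) hyS⟩)
  · obtain ⟨g, hg, hxg⟩ := mem_iUnion₂.1 (ht hx.2)
    exact mem_biUnion hg ⟨hx.1, hxg⟩

theorem IsApproxSubgroup.finiteLocalComplexity {Λ : Set G} (hΛ : IsApproxSubgroup Λ)
    (hΛd : UniformlyDiscrete Λ) : FiniteLocalComplexity Λ := by
  obtain ⟨-, hinv, F, hF, hΛF⟩ := hΛ
  intro K hK
  refine (hF.biUnion fun f _ =>
    ((hΛd.finite_inter_isCompact (hK.smul f⁻¹)).image (f * ·))).subset ?_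
  rintro _ ⟨hz, hzK⟩
  rw [hinv] at hz
  obtain ⟨f, hf, l, hl, rfl⟩ := hΛF hz
  exact mem_biUnion hf ⟨l, ⟨hl, f * l, hzK, by simp⟩, rfl⟩

end UniformlyDiscrete

section ChabautyFell

variable {X : Type*} [TopologicalSpace X]

lemma isOpen_setOf_inter_nonempty {U : Set X} (hU : IsOpen U) :
    IsOpen {C : CFSp X | (C.1 ∩ U).Nonempty} :=
  isOpen_generateFrom_of_mem (Or.inr ⟨U, hU, rfl⟩)

variable [R1Space X] [SecondCountableTopology X]

lemma natCast_le_encard_image_mk_inter_iff {S U : Set X} (hU : IsOpen U) (k : ℕ) :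
    (k : ℕ∞) ≤ (mk '' (S ∩ U)).encard ↔
      ∃ b : Fin k → countableBasis X, (∀ i, (b i : Set X) ⊆ U) ∧
        Pairwise (Disjoint on fun i => (b i : Set X)) ∧ ∀ i, (S ∩ b i).Nonempty := by
  constructor
  · intro hk
    obtain ⟨t, htT, htk⟩ := exists_subset_encard_eq hk
    obtain ⟨n, q, hq, rfl⟩ := (finite_of_encard_eq_coe htk).fin_param
    obtain rfl : n = k := by simpa [← image_univ, hq.encard_image] using htk
    choose x hx hxq using fun i => htT (mem_range_self i)
    have hdisj : Pairwise (Disjoint on fun i => 𝓝 (x i)) := fun i j hij =>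
      disjoint_nhds_nhds_iff_not_inseparable.2 fun h => hij (hq (by
        rw [← hxq i, ← hxq j, mk_eq_mk.2 h]))
    obtain ⟨b, hb, hbd⟩ := hdisj.exists_mem_filter_basis_of_disjoint fun i =>
      (isBasis_countableBasis X).nhds_hasBasis.restrict_subset (hU.mem_nhds (hx i).2)
    exact ⟨fun i => ⟨b i, (hb i).1.1⟩, fun i => (hb i).2, hbd,
      fun i => ⟨x i, (hx i).1, (hb i).1.2⟩⟩
  · rintro ⟨b, hbU, hbd, hSb⟩
    choose x hxS hxb using hSb
    have hinj : Injective fun i => mk (x i) := by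
      intro i j hij
      by_contra hne
      exact disjoint_left.1 (hbd hne) ((mk_eq_mk.1 hij).mem_open_iff
        (isOpen_of_mem_countableBasis (b i).2) |>.1 (hxb i)) (hxb j)
    have hrange : (range fun i => mk (x i)) ⊆ mk '' (S ∩ U) :=
      range_subset_iff.2 fun i => ⟨x i, ⟨hxS i, hbU i (hxb i)⟩, rfl⟩
    calc (k : ℕ∞) = ENat.card (Fin k) := by simp
      _ ≤ (range fun i => mk (x i)).encard := hinj.encard_range
      _ ≤ _ := encard_le_encard hrange

lemma measurable_encard_image_mk_inter {U : Set X} (hU : IsOpen U) :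
    Measurable fun C : CFSp X => (mk '' (C.1 ∩ U)).encard := by
  have := (countable_countableBasis X).to_subtype
  have hle : ∀ k : ℕ, MeasurableSet {C : CFSp X | (k : ℕ∞) ≤ (mk '' (C.1 ∩ U)).encard} := by
    intro k
    have heq : {C : CFSp X | (k : ℕ∞) ≤ (mk '' (C.1 ∩ U)).encard} =
        ⋃ (b : Fin k → countableBasis X) (_ : (∀ i, (b i : Set X) ⊆ U) ∧
          Pairwise (Disjoint on fun i => (b i : Set X))),
          ⋂ i, {C : CFSp X | (C.1 ∩ b i).Nonempty} := by
      ext C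
      simp [natCast_le_encard_image_mk_inter_iff hU, and_assoc]
    rw [heq]
    exact .iUnion fun b => .iUnion fun _ => .iInter fun i =>
      (isOpen_setOf_inter_nonempty (isOpen_of_mem_countableBasis (b i).2)).measurableSet
  refine ENat.measurable_iff.2 fun k => ?_
  have heq : (fun C : CFSp X => (mk '' (C.1 ∩ U)).encard) ⁻¹' {(k : ℕ∞)} =
      {C | (k : ℕ∞) ≤ (mk '' (C.1 ∩ U)).encard} \
        {C | ((k + 1 : ℕ) : ℕ∞) ≤ (mk '' (C.1 ∩ U)).encard} := by
    ext C
    simp only [mem_preimage, mem_singleton_iff, mem_sdiff, mem_ofPred_eq, not_le, Nat.cast_add,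
      Nat.cast_one, ENat.lt_add_one_iff (ENat.natCast_ne_top k)]
    exact ⟨fun h => ⟨h.ge, h.le⟩, fun h => le_antisymm h.2 h.1⟩
  rw [heq]
  exact (hle k).diff (hle (k + 1))

variable [MeasurableSpace X] [BorelSpace X]

lemma measurable_classCount_apply {U : Set X} (hU : IsOpen U) :
    Measurable fun C : CFSp X => classCount C.1 U := by
  simp_rw [classCount_apply _ hU.measurableSet]
  exact measurable_from_top.comp (measurable_encard_image_mk_inter hU)

end ChabautyFell

open Measure in
theorem measurable_measure_of_isOpen {α X : Type*} [MeasurableSpace α] [TopologicalSpace X]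
    [WeaklyLocallyCompactSpace X] [SigmaCompactSpace X] [MeasurableSpace X] [BorelSpace X]
    {κ : α → Measure X} [∀ a, IsFiniteMeasureOnCompacts (κ a)]
    (hκ : ∀ U, IsOpen U → Measurable fun a => κ a U) : Measurable κ := by
  let K := CompactExhaustion.choice X
  have hdir : Directed (· ⊆ ·) fun n => interior (K n) :=
    Monotone.directed_le fun m n h => interior_mono (K.subset h)
  have hcov : ⋃ n, interior (K n) = univ :=
    eq_univ_of_forall fun x => mem_iUnion.2 ⟨_, K.subset_interior_succ _ (K.mem_find x)⟩
  have hrestrict : ∀ n, Measurable fun a => (κ a).restrict (interior (K n)) := by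
    intro n
    have (a : α) : IsFiniteMeasure ((κ a).restrict (interior (K n))) :=
      ⟨by simpa using (measure_mono interior_subset).trans_lt (K.isCompact n).measure_lt_top⟩
    refine .measure_of_isPiSystem BorelSpace.measurable_eq isPiSystem_isOpen (fun U hU => ?_) ?_
    · simpa [restrict_apply (IsOpen.measurableSet hU)] using hκ _ (IsOpen.inter hU isOpen_interior)
    · simpa using hκ _ isOpen_interior
  refine measurable_of_measurable_coe _ fun s hs => ?_
  have heq : (fun a => κ a s) = fun a => ⨆ n, (κ a).restrict (interior (K n)) s := by
    ext a
    rw [← restrict_iUnion_apply_eq_iSup hdir hs, hcov, restrict_univ]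
  rw [heq]
  exact .iSup fun n => (measurable_coe hs).comp (hrestrict n)

theorem inv_smul_set_mul_smul_set {G : Type*} [Group G] (g : G) (S : Set G) :
    (g • S)⁻¹ * (g • S) = S⁻¹ * S := by
  rw [inv_smul_set_distrib, op_smul_set_mul_eq_mul_smul_set, inv_smul_smul]

section Hull

variable {G : Type*} [Group G] [TopologicalSpace G] [IsTopologicalGroup G]

theorem CFSp.smul_val (g : G) (C : CFSp G) : (g • C).1 = g • C.1 := rfl

theorem CFSp.continuous_const_smul_s11 (g : G) : Continuous fun C : CFSp G => g • C := by
  have hinter (C K : Set G) : g • C ∩ K = g • (C ∩ g⁻¹ • K) := by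
    rw [smul_set_inter, smul_inv_smul]
  refine continuous_generateFrom_iff.2 ?_
  rintro s (⟨K, hK, rfl⟩ | ⟨U, hU, rfl⟩)
  · have : (g • ·) ⁻¹' {C : CFSp G | C.1 ∩ K = ∅} = {C | C.1 ∩ g⁻¹ • K = ∅} := by
      ext C
      change g • C.1 ∩ K = ∅ ↔ C.1 ∩ g⁻¹ • K = ∅
      rw [hinter, smul_set_eq_empty]
    exact this ▸ isOpen_generateFrom_of_mem (Or.inl ⟨_, hK.smul _, rfl⟩)
  · have : (g • ·) ⁻¹' {C : CFSp G | (C.1 ∩ U).Nonempty} = {C | (C.1 ∩ g⁻¹ • U).Nonempty} := by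
      ext C
      change (g • C.1 ∩ U).Nonempty ↔ (C.1 ∩ g⁻¹ • U).Nonempty
      rw [hinter, smul_set_nonempty]
    exact this ▸ isOpen_setOf_inter_nonempty (hU.smul _)

theorem smul_mem_extHull_iff {Λ : Set G} {g : G} {C : CFSp G} :
    g • C ∈ extHull Λ ↔ C ∈ extHull Λ := by
  change (g • C.1)⁻¹ * (g • C.1) ⊆ _ ↔ _
  rw [inv_smul_set_mul_smul_set]
  rfl

theorem isClosed_extHull (Λ : Set G) : IsClosed (extHull Λ) := by
  rw [← isOpen_compl_iff, isOpen_iff_forall_mem_open]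
  intro C hC
  obtain ⟨_, ⟨a, ha, b, hb, rfl⟩, hab⟩ := not_subset.1 hC
  have hopen : IsOpen ((fun p : G × G => p.1⁻¹ * p.2) ⁻¹' (closure (Λ⁻¹ * Λ))ᶜ) :=
    isClosed_closure.isOpen_compl.preimage (continuous_fst.inv.mul continuous_snd)
  obtain ⟨P, Q, hP, hQ, haP, hbQ, hPQ⟩ :=
    isOpen_prod_iff.1 hopen a⁻¹ b (by simpa only [mem_preimage, inv_inv, mem_compl_iff] using hab)
  refine ⟨{C | (C.1 ∩ P).Nonempty} ∩ {C | (C.1 ∩ Q).Nonempty}, ?_,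
    (isOpen_setOf_inter_nonempty hP).inter (isOpen_setOf_inter_nonempty hQ),
    ⟨a⁻¹, mem_inv.1 ha, haP⟩, ⟨b, hb, hbQ⟩⟩
  rintro C' ⟨⟨x, hx, hxP⟩, ⟨y, hy, hyQ⟩⟩ hC'
  exact hPQ (mk_mem_prod hxP hyQ) (hC' (mul_mem_mul (inv_mem_inv.2 hx) hy))

variable [MeasurableSpace G] [BorelSpace G]

theorem classCount_smul (g : G) (S : Set G) {A : Set G} (hA : MeasurableSet A) :
    classCount (g • S) A = classCount S (g⁻¹ • A) := by
  rw [classCount_apply _ hA, classCount_apply _ (hA.const_smul g⁻¹), ← smul_inv_smul g A,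
    ← smul_set_inter, inv_smul_smul, image_smul_comm mk g _ fun x => mk_smul g x, encard_smul_set]

end Hull

section HullCount

variable {G : Type*} [Group G] [TopologicalSpace G] [IsTopologicalGroup G] {Λ : Set G} {C : CFSp G}

theorem encard_inv_mul_inter_closure_lt_top (hΛ : FiniteLocalComplexity Λ) {L : Set G}
    (hL : IsCompact L) : ((Λ⁻¹ * Λ) ∩ closure (L⁻¹ * L)).encard < ⊤ :=
  (hΛ _ (hL.inv.mul hL).closure).encard_lt_top

variable [WeaklyLocallyCompactSpace G]

theorem exists_mem_inv_mul_mk_eq_of_mem_extHull (hΛ : FiniteLocalComplexity Λ)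
    (hC : C ∈ extHull Λ) {x y : G} (hx : x ∈ C.1) (hy : y ∈ C.1) :
    ∃ l ∈ Λ⁻¹ * Λ, mk (x⁻¹ * y) = mk l :=
  (exists_inseparable_of_mem_closure_of_finite_inter_isCompact hΛ
    (hC (mul_mem_mul (inv_mem_inv.2 hx) hy))).imp fun _ hl => ⟨hl.1, mk_eq_mk.2 hl.2⟩

theorem encard_image_mk_inter_le_of_mem_extHull (hΛ : FiniteLocalComplexity Λ)
    (hC : C ∈ extHull Λ) {L : Set G} :
    (mk '' (C.1 ∩ L)).encard ≤ ((Λ⁻¹ * Λ) ∩ closure (L⁻¹ * L)).encard := by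
  rcases (C.1 ∩ L).eq_empty_or_nonempty with h | ⟨x₀, hx₀C, hx₀L⟩
  · simp [h]
  calc (mk '' (C.1 ∩ L)).encard
      ≤ ((mk x₀ * ·) '' (mk '' ((Λ⁻¹ * Λ) ∩ closure (L⁻¹ * L)))).encard := by
        refine encard_le_encard ?_
        rintro _ ⟨x, ⟨hxC, hxL⟩, rfl⟩
        obtain ⟨l, hl, hxl⟩ := exists_mem_inv_mul_mk_eq_of_mem_extHull hΛ hC hx₀C hxC
        have hlL : l ∈ closure (L⁻¹ * L) := ((mk_eq_mk.1 hxl).mem_closed_iff isClosed_closure).1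
          (subset_closure (mul_mem_mul (inv_mem_inv.2 hx₀L) hxL))
        refine ⟨mk l, ⟨l, ⟨hl, hlL⟩, rfl⟩, ?_⟩
        rw [← hxl, mk_mul, mk_inv]
        exact mul_inv_cancel_left _ _
    _ ≤ _ := (encard_image_le _ _).trans (encard_image_le _ _)

variable [MeasurableSpace G] [BorelSpace G]

theorem encard_image_mk_inter_le_one_of_mem_extHull (hΛ : FiniteLocalComplexity Λ)
    (hC : C ∈ extHull Λ) {B : Set G} (hB : MeasurableSet B) (hBΛ : B⁻¹ * B ∩ (Λ⁻¹ * Λ) ⊆ {1}) :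
    (mk '' (C.1 ∩ B)).encard ≤ 1 := by
  refine encard_le_one_iff.2 ?_
  rintro _ _ ⟨x, ⟨hxC, hxB⟩, rfl⟩ ⟨y, ⟨hyC, hyB⟩, rfl⟩
  obtain ⟨l, hl, hxy⟩ := exists_mem_inv_mul_mk_eq_of_mem_extHull hΛ hC hxC hyC
  have hmk : mk y = mk (x * l) := by rw [mk_mul, ← hxy, mk_mul, mk_inv, mul_inv_cancel_left]
  have hxl : x * l ∈ B := ((mk_eq_mk.1 hmk).mem_measurableSet_iff hB).1 hyB
  have hl1 : l = 1 := hBΛ ⟨⟨x⁻¹, inv_mem_inv.2 hxB, x * l, hxl, inv_mul_cancel_left x l⟩, hl⟩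
  rw [hmk, hl1, mul_one]

end HullCount

section Periodization

variable {G : Type*} [Group G] [TopologicalSpace G] [MeasurableSpace G]

/-- Off the hull the count need not be locally finite; cutting it off there costs nothing since
`ν` is concentrated on the hull, and makes every `hullClassCount Λ C` finite on compacts. -/
noncomputable def hullClassCount (Λ : Set G) : CFSp G → Measure G :=
  (extHull Λ).indicator fun C => classCount C.1

theorem hullClassCount_apply (Λ : Set G) (C : CFSp G) (A : Set G) :
    hullClassCount Λ C A = (extHull Λ).indicator (fun C => classCount C.1 A) C := by
  by_cases hC : C ∈ extHull Λ <;> simp [hullClassCount, hC]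

noncomputable def periodization (Λ : Set G) (ν : Measure (CFSp G)) : Measure G :=
  ν.bind (hullClassCount Λ)

variable [IsTopologicalGroup G] [BorelSpace G] {Λ : Set G} {ν : Measure (CFSp G)}

theorem hullClassCount_smul (g : G) (C : CFSp G) {A : Set G} (hA : MeasurableSet A) :
    hullClassCount Λ (g • C) A = hullClassCount Λ C (g⁻¹ • A) := by
  by_cases hC : C ∈ extHull Λ
  · rw [hullClassCount_apply, hullClassCount_apply, indicator_of_mem (smul_mem_extHull_iff.2 hC),
      indicator_of_mem hC, CFSp.smul_val, classCount_smul _ _ hA]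
  · rw [hullClassCount_apply, hullClassCount_apply,
      indicator_of_notMem (mt smul_mem_extHull_iff.1 hC), indicator_of_notMem hC]

variable [WeaklyLocallyCompactSpace G]

theorem hullClassCount_le (hΛ : FiniteLocalComplexity Λ) (C : CFSp G) {L A : Set G}
    (hA : MeasurableSet A) (hAL : A ⊆ L) :
    hullClassCount Λ C A ≤ ((Λ⁻¹ * Λ) ∩ closure (L⁻¹ * L)).encard := by
  rw [hullClassCount_apply]
  refine indicator_apply_le' (fun hC => ?_) fun _ => zero_le
  rw [classCount_apply _ hA, ENat.toENNReal_le]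
  exact (encard_le_encard (image_mono (inter_subset_inter_right _ hAL))).trans
    (encard_image_mk_inter_le_of_mem_extHull hΛ hC)

theorem isFiniteMeasureOnCompacts_hullClassCount (hΛ : FiniteLocalComplexity Λ) (C : CFSp G) :
    IsFiniteMeasureOnCompacts (hullClassCount Λ C) := by
  refine ⟨fun K hK => ?_⟩
  obtain ⟨L, hL, hKL⟩ := exists_compact_superset hK
  calc hullClassCount Λ C K ≤ hullClassCount Λ C (interior L) := measure_mono hKL
    _ ≤ _ := hullClassCount_le hΛ C isOpen_interior.measurableSet interior_subset
    _ < ⊤ := ENat.toENNReal_lt_top.2 (encard_inv_mul_inter_closure_lt_top hΛ hL)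

variable [SecondCountableTopology G]

theorem measurable_hullClassCount (hΛ : FiniteLocalComplexity Λ) :
    Measurable (hullClassCount Λ) := by
  have := isFiniteMeasureOnCompacts_hullClassCount hΛ
  refine measurable_measure_of_isOpen fun U hU => ?_
  simp_rw [hullClassCount_apply]
  exact (measurable_classCount_apply hU).indicator (isClosed_extHull Λ).measurableSet

theorem periodization_apply (hΛ : FiniteLocalComplexity Λ) {s : Set G} (hs : MeasurableSet s) :
    periodization Λ ν s = ∫⁻ C, hullClassCount Λ C s ∂ν :=
  Measure.bind_apply hs (measurable_hullClassCount hΛ).aemeasurable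

theorem isMulLeftInvariant_periodization (hΛ : FiniteLocalComplexity Λ)
    (hν : ∀ g : G, ν.map (g • ·) = ν) : (periodization Λ ν).IsMulLeftInvariant := by
  refine ⟨fun g => Measure.ext fun s hs => ?_⟩
  have hs' : MeasurableSet (g⁻¹ • s) := hs.const_smul _
  rw [Measure.map_apply (measurable_const_mul g) hs, show (g * ·) ⁻¹' s = g⁻¹ • s from
    preimage_smul g s, periodization_apply hΛ hs',
    periodization_apply hΛ hs]
  calc ∫⁻ C, hullClassCount Λ C (g⁻¹ • s) ∂ν = ∫⁻ C, hullClassCount Λ (g • C) s ∂ν :=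
        lintegral_congr fun C => (hullClassCount_smul g C hs).symm
    _ = ∫⁻ C, hullClassCount Λ C s ∂(ν.map (g • ·)) :=
        (lintegral_map ((Measure.measurable_coe hs).comp (measurable_hullClassCount hΛ))
          (CFSp.continuous_const_smul_s11 g).measurable).symm
    _ = ∫⁻ C, hullClassCount Λ C s ∂ν := by rw [hν]

theorem isFiniteMeasureOnCompacts_periodization (hΛ : FiniteLocalComplexity Λ)
    [IsFiniteMeasure ν] : IsFiniteMeasureOnCompacts (periodization Λ ν) := by
  refine ⟨fun K hK => ?_⟩
  obtain ⟨L, hL, hKL⟩ := exists_compact_superset hK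
  calc periodization Λ ν K ≤ periodization Λ ν (interior L) := measure_mono hKL
    _ = ∫⁻ C, hullClassCount Λ C (interior L) ∂ν :=
        periodization_apply hΛ isOpen_interior.measurableSet
    _ ≤ ∫⁻ _, (((Λ⁻¹ * Λ) ∩ closure (L⁻¹ * L)).encard : ℝ≥0∞) ∂ν :=
        lintegral_mono fun C => hullClassCount_le hΛ C isOpen_interior.measurableSet interior_subset
    _ < ⊤ := by
        rw [lintegral_const]
        exact ENNReal.mul_lt_top (ENat.toENNReal_lt_top.2
          (encard_inv_mul_inter_closure_lt_top hΛ hL)) (measure_lt_top _ _)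

theorem one_le_periodization_univ (hΛ : FiniteLocalComplexity Λ) [IsProbabilityMeasure ν]
    (hhull : ν (extHull Λ)ᶜ = 0) (hempty : ν {emptyCF G} = 0) : 1 ≤ periodization Λ ν univ := by
  have hmem : ∀ᵐ C ∂ν, C ∈ extHull Λ := ae_iff.2 hhull
  have hne : ∀ᵐ C ∂ν, C ≠ emptyCF G := ae_iff.2 (by simpa using hempty)
  rw [periodization_apply hΛ .univ]
  calc 1 = ∫⁻ _, 1 ∂ν := by simp
    _ ≤ _ := lintegral_mono_ae ?_
  filter_upwards [hmem, hne] with C hC hCe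
  have hCne : C.1.Nonempty := nonempty_iff_ne_empty.2 fun h => hCe (Subtype.ext h)
  rw [hullClassCount_apply, indicator_of_mem hC, classCount_apply _ .univ, inter_univ]
  exact_mod_cast one_le_encard_iff_nonempty.2 (hCne.image mk)

theorem isHaarMeasure_periodization (hΛ : FiniteLocalComplexity Λ)
    (hν : IsInvariantProperProb (extHull Λ) ν) : (periodization Λ ν).IsHaarMeasure := by
  obtain ⟨hprob, hhull, hempty, hinv⟩ := hν
  have := isFiniteMeasureOnCompacts_periodization (ν := ν) hΛ
  have := isMulLeftInvariant_periodization hΛ hinv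
  obtain ⟨n, hn⟩ : ∃ n, periodization Λ ν (compactCovering G n) ≠ 0 := by
    by_contra! h
    have h0 := measure_iUnion_null h
    rw [iUnion_compactCovering] at h0
    exact (one_le_periodization_univ hΛ hhull hempty).not_gt (h0 ▸ zero_lt_one)
  have := isOpenPosMeasure_of_mulLeftInvariant_of_compact _ (isCompact_compactCovering G n) hn
  exact {}

theorem periodization_le_one (hΛ : FiniteLocalComplexity Λ) [IsProbabilityMeasure ν] {B : Set G}
    (hB : MeasurableSet B) (hBΛ : B⁻¹ * B ∩ (Λ⁻¹ * Λ) ⊆ {1}) : periodization Λ ν B ≤ 1 := by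
  rw [periodization_apply hΛ hB]
  calc ∫⁻ C, hullClassCount Λ C B ∂ν ≤ ∫⁻ _, 1 ∂ν := lintegral_mono fun C => by
        rw [hullClassCount_apply]
        refine indicator_apply_le' (fun hC => ?_) fun _ => zero_le
        rw [classCount_apply _ hB]
        simpa using ENat.toENNReal_le.2 (encard_image_mk_inter_le_one_of_mem_extHull hΛ hC hB hBΛ)
    _ = 1 := by simp

end Periodization

section Greedy

variable {G : Type*} [Group G]

theorem inv_mul_inter_subset_one_iff {S D : Set G} :
    S⁻¹ * S ∩ D ⊆ {1} ↔ ∀ x ∈ S, ∀ y ∈ S, x⁻¹ * y ∈ D → x = y := by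
  constructor
  · intro h x hx y hy hxy
    exact inv_mul_eq_one.1 (h ⟨mul_mem_mul (inv_mem_inv.2 hx) hy, hxy⟩)
  · rintro h _ ⟨⟨a, ha, b, hb, rfl⟩, hab⟩
    obtain rfl := h a⁻¹ ha b hb (by simpa using hab)
    simp

def greedyDomain (A : ℕ → Set G) (D : Set G) : ℕ → Set G
  | 0 => ∅
  | n + 1 => greedyDomain A D n ∪ (A n \ (greedyDomain A D n * D))

variable {A : ℕ → Set G} {D : Set G}

theorem monotone_greedyDomain : Monotone (greedyDomain A D) :=
  monotone_nat_of_le_succ fun _ => subset_union_left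

theorem measurableSet_greedyDomain [MeasurableSpace G] [MeasurableMul G] (hD : D.Countable)
    (hA : ∀ n, MeasurableSet (A n)) : ∀ n, MeasurableSet (greedyDomain A D n)
  | 0 => .empty
  | n + 1 => by
    have hB := measurableSet_greedyDomain hD hA n
    have hBD : MeasurableSet (greedyDomain A D n * D) := by
      rw [← iUnion_mul_right_image]
      refine .biUnion hD fun d _ => ?_
      rw [image_mul_right]
      exact measurable_mul_const _ hB
    exact hB.union ((hA n).diff hBD)

theorem greedyDomain_separated (hDinv : D⁻¹ ⊆ D) (hA : ∀ n, (A n)⁻¹ * A n ∩ D ⊆ {1}) :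
    ∀ n, ∀ x ∈ greedyDomain A D n, ∀ y ∈ greedyDomain A D n, x⁻¹ * y ∈ D → x = y
  | 0 => by simp [greedyDomain]
  | n + 1 => by
    rintro x (hx | ⟨hxA, hxB⟩) y (hy | ⟨hyA, hyB⟩) hxy
    · exact greedyDomain_separated hDinv hA n x hx y hy hxy
    · exact (hyB ⟨x, hx, x⁻¹ * y, hxy, mul_inv_cancel_left x y⟩).elim
    · refine (hxB ⟨y, hy, (x⁻¹ * y)⁻¹, hDinv (inv_mem_inv.2 hxy), ?_⟩).elim
      simp
    · exact inv_mul_inter_subset_one_iff.1 (hA n) x hxA y hyA hxy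

theorem iUnion_greedyDomain_mul (hD1 : 1 ∈ D) (hA : ⋃ n, A n = univ) :
    (⋃ n, greedyDomain A D n) * D = univ := by
  refine eq_univ_of_forall fun g => ?_
  obtain ⟨n, hn⟩ := mem_iUnion.1 (hA ▸ mem_univ g)
  by_cases hg : g ∈ greedyDomain A D n * D
  · exact mul_subset_mul_right (subset_iUnion _ n) hg
  · exact ⟨g, mem_iUnion.2 ⟨n + 1, Or.inr ⟨hn, hg⟩⟩, 1, hD1, mul_one g⟩

theorem exists_measurableSet_mul_eq_univ_of_iUnion_eq_univ [MeasurableSpace G] [MeasurableMul G]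
    (hD : D.Countable) (hD1 : 1 ∈ D) (hDinv : D⁻¹ ⊆ D) (hAm : ∀ n, MeasurableSet (A n))
    (hAD : ∀ n, (A n)⁻¹ * A n ∩ D ⊆ {1}) (hA : ⋃ n, A n = univ) :
    ∃ B : Set G, MeasurableSet B ∧ B * D = univ ∧ B⁻¹ * B ∩ D ⊆ {1} := by
  refine ⟨⋃ n, greedyDomain A D n, .iUnion (measurableSet_greedyDomain hD hAm),
    iUnion_greedyDomain_mul hD1 hA, inv_mul_inter_subset_one_iff.2 ?_⟩
  intro x hx y hy hxy
  obtain ⟨m, hxm⟩ := mem_iUnion.1 hx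
  obtain ⟨n, hyn⟩ := mem_iUnion.1 hy
  exact greedyDomain_separated hDinv hAD (max m n) x (monotone_greedyDomain (le_max_left m n) hxm)
    y (monotone_greedyDomain (le_max_right m n) hyn) hxy

end Greedy

theorem UniformlyDiscrete.exists_measurableSet_mul_eq_univ {G : Type*} [Group G]
    [TopologicalSpace G] [IsTopologicalGroup G] [SecondCountableTopology G] [MeasurableSpace G]
    [BorelSpace G] {Λ : Set G} (hΛ : UniformlyDiscrete Λ) (hΛc : (Λ⁻¹ * Λ).Countable)
    (hne : Λ.Nonempty) :
    ∃ B : Set G, MeasurableSet B ∧ B * (Λ⁻¹ * Λ) = univ ∧ B⁻¹ * B ∩ (Λ⁻¹ * Λ) ⊆ {1} := by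
  obtain ⟨V, hV, hVΛ⟩ := hΛ
  obtain ⟨W, hWo, hW1, hWV⟩ := exists_isOpen_one_mem_inv_mul_subset hV
  obtain ⟨u, hu⟩ := exists_dense_seq G
  obtain ⟨l, hl⟩ := hne
  refine exists_measurableSet_mul_eq_univ_of_iUnion_eq_univ (A := fun n => u n • W) hΛc
    ⟨l⁻¹, inv_mem_inv.2 hl, l, hl, inv_mul_cancel l⟩ (by rw [mul_inv_rev, inv_inv])
    (fun n => (hWo.smul _).measurableSet) (fun n => ?_) (eq_univ_of_forall fun g => ?_)
  · rw [inv_smul_set_mul_smul_set]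
    exact fun z hz => hVΛ ⟨hWV hz.1, hz.2⟩
  · obtain ⟨n, hn⟩ := hu.exists_mem_open (hWo.inv.smul g) ⟨g, 1, by simpa using hW1, mul_one g⟩
    exact mem_iUnion.2 ⟨n, mem_smul_set_inv.1 hn⟩

/-- a ⋆-approximate lattice `Λ` has "finite covolume": there is a Borel set `B` of
finite Haar measure with `BΛ² = G` and `B⁻¹B ∩ Λ² = {1}`. -/
theorem statement11 {G : Type*} [Group G] [TopologicalSpace G] [IsTopologicalGroup G]
    [LocallyCompactSpace G] [SecondCountableTopology G]
    [MeasurableSpace G] [BorelSpace G]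
    (Λ : Set G) (hΛ : IsStarApproxLattice Λ)
    (μ : Measure G) [μ.IsHaarMeasure] :
    ∃ B : Set G, MeasurableSet B ∧ μ B < ⊤ ∧ B * (Λ * Λ) = Set.univ ∧
      (B⁻¹ * B) ∩ (Λ * Λ) = {1} := by
  obtain ⟨hΛa, hΛd, ν, hν⟩ := hΛ
  have hΛf := hΛa.finiteLocalComplexity hΛd
  have hΛ2 : Λ⁻¹ * Λ = Λ * Λ := by rw [hΛa.2.1]
  obtain ⟨B, hBm, hBcov, hBsep⟩ := hΛd.exists_measurableSet_mul_eq_univ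
    (Countable.of_finite_inter_isCompact hΛf) ⟨1, hΛa.1⟩
  have := hν.1
  have := isHaarMeasure_periodization hΛf hν
  refine ⟨B, hBm, ?_, hΛ2 ▸ hBcov, (hΛ2 ▸ hBsep).antisymm (singleton_subset_iff.2 ⟨?_, ?_⟩)⟩
  · rw [Measure.isMulLeftInvariant_eq_smul μ (periodization Λ ν), Measure.smul_apply,
      ENNReal.smul_def, smul_eq_mul]
    exact ENNReal.mul_lt_top ENNReal.coe_lt_top
      ((periodization_le_one hΛf hBm hBsep).trans_lt ENNReal.one_lt_top)
  · obtain ⟨b, hb, -⟩ := hBcov.symm ▸ mem_univ (1 : G)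
    exact ⟨b⁻¹, inv_mem_inv.2 hb, b, hb, inv_mul_cancel b⟩
  · exact ⟨1, hΛa.1, 1, hΛa.1, mul_one 1⟩
end

section
/- Let Γ be a discrete subgroup of a product G × H of locally compact second countable groups. Suppose that Γ projects densely to H and that G is unimodular. Let W₀ be a compact neighbourhood of the identity in H and suppose there is a subset F ⊆ G of finite Haar measure such that F · p_G(Γ ∩ (G × W₀)) = G, where p_G : G × H → G is the projection. Then Γ is a lattice in G × H, i.e. a discrete subgroup of finite covolume (there exists a Borel subset of G × H of finite Haar measure meeting every coset of Γ). -/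
/-!
Take `K = closure (W₀ W₀⁻¹)` and `D = F × K` (after replacing `F` by a measurable hull).
Since `p_H(Γ)` is dense, every `(g, h)` can be moved by some `γ ∈ Γ` so that `h γ_H⁻¹ ∈ W₀`, and
then the covering hypothesis writes `g γ_G⁻¹ = f δ_G` with `δ ∈ Γ`, `δ_H ∈ W₀`; hence
`(g, h) ∈ D (δ γ)`. For finiteness, `A ↦ μ (A × K)` is a left-invariant measure on `G` that is
finite on compact sets, so by uniqueness of Haar measure it is a multiple of `μ_G`.
-/

open scoped Pointwise ENNReal NNReal
open MeasureTheory

open Set Filter Topology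

section Covering

variable {G H : Type*} [Group G] [Group H] [TopologicalSpace H] [IsTopologicalGroup H]

theorem Dense.exists_mul_inv_mem {S : Set H} (hS : Dense S) {W : Set H} (hW : W ∈ 𝓝 (1 : H))
    (h : H) : ∃ s ∈ S, h * s⁻¹ ∈ W := by
  have hcont : ContinuousAt (fun y : H => h * y⁻¹) h := by fun_prop
  have hnhds : (fun y : H => h * y⁻¹) ⁻¹' W ∈ 𝓝 h :=
    hcont.preimage_mem_nhds (by rwa [mul_inv_cancel])
  exact hS.inter_nhds_nonempty hnhds

theorem prod_mul_subgroup_eq_univ_of_dense_snd (Γ : Subgroup (G × H))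
    (hdense : Dense (Prod.snd '' (Γ : Set (G × H)))) {W₀ : Set H} (hW₀ : W₀ ∈ 𝓝 (1 : H))
    {F : Set G} (hcover : F * (Prod.fst '' ((Γ : Set (G × H)) ∩ (univ ×ˢ W₀))) = univ) :
    F ×ˢ (W₀ * W₀⁻¹) * (Γ : Set (G × H)) = univ := by
  refine eq_univ_of_forall fun ⟨g, h⟩ => ?_
  obtain ⟨_, ⟨γ, hγ, rfl⟩, hγW⟩ := hdense.exists_mul_inv_mem hW₀ h
  obtain ⟨f, hf, _, ⟨δ, ⟨hδ, -, hδW⟩, rfl⟩, hfδ⟩ :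
      g * γ.1⁻¹ ∈ F * (Prod.fst '' ((Γ : Set (G × H)) ∩ (univ ×ˢ W₀))) := by
    rw [hcover]; trivial
  have hfst : f * (δ.1 * γ.1) = g := by
    rw [← mul_assoc]; exact (mul_inv_eq_iff_eq_mul.mp hfδ.symm).symm
  refine ⟨(f, h * γ.2⁻¹ * δ.2⁻¹), ⟨hf, mul_mem_mul hγW (inv_mem_inv.2 hδW)⟩, δ * γ,
    mul_mem hδ hγ, Prod.ext hfst ?_⟩
  show h * γ.2⁻¹ * δ.2⁻¹ * (δ.2 * γ.2) = h
  group

end Covering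

namespace MeasureTheory.Measure

variable {G H : Type*} [MeasurableSpace G] [MeasurableSpace H]
  (μ : Measure (G × H)) (K : Set H)

theorem fst_restrict_univ_prod_apply {A : Set G} (hA : MeasurableSet A) :
    (μ.restrict (univ ×ˢ K)).fst A = μ (A ×ˢ K) := by
  rw [fst_apply hA, restrict_apply (measurable_fst hA), ← prod_univ, prod_inter_prod, inter_univ,
    univ_inter]

theorem map_prodCongr_mulLeft_refl_eq_self [Group G] [Group H] [MeasurableMul G]
    [μ.IsMulLeftInvariant] (g : G) :
    μ.map ((MeasurableEquiv.mulLeft g).prodCongr (MeasurableEquiv.refl H)) = μ := by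
  convert map_mul_left_eq_self μ (g, 1) using 2
  ext x
  exacts [rfl, (one_mul x.2).symm]

instance isMulLeftInvariant_fst_restrict_univ_prod [Group G] [Group H] [MeasurableMul G]
    [μ.IsMulLeftInvariant] : (μ.restrict (univ ×ˢ K)).fst.IsMulLeftInvariant := by
  refine ⟨fun g => ext fun A hA => ?_⟩
  set e := (MeasurableEquiv.mulLeft g).prodCongr (MeasurableEquiv.refl H)
  have hpre : ((g * ·) ⁻¹' A) ×ˢ K = e ⁻¹' (A ×ˢ K) := rfl
  rw [map_apply (measurable_const_mul g) hA,
    fst_restrict_univ_prod_apply μ K (measurable_const_mul g hA),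
    fst_restrict_univ_prod_apply μ K hA, hpre, ← e.map_apply, map_prodCongr_mulLeft_refl_eq_self]

theorem isFiniteMeasureOnCompacts_fst_restrict_univ_prod [Group G] [TopologicalSpace G]
    [IsTopologicalGroup G] [OpensMeasurableSpace G] [TopologicalSpace H]
    [IsFiniteMeasureOnCompacts μ] (hK : IsCompact K) :
    IsFiniteMeasureOnCompacts (μ.restrict (univ ×ˢ K)).fst := by
  refine ⟨fun C hC => ?_⟩
  calc (μ.restrict (univ ×ˢ K)).fst C
      ≤ (μ.restrict (univ ×ˢ K)).fst (closure C) := measure_mono subset_closure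
    _ = μ (closure C ×ˢ K) := fst_restrict_univ_prod_apply μ K isClosed_closure.measurableSet
    _ < ⊤ := (hC.closure.prod hK).measure_lt_top

theorem measure_prod_lt_top [Group G] [TopologicalSpace G] [IsTopologicalGroup G]
    [LocallyCompactSpace G] [SecondCountableTopology G] [BorelSpace G] [Group H]
    [TopologicalSpace H] [μ.IsMulLeftInvariant] [IsFiniteMeasureOnCompacts μ] (hK : IsCompact K)
    (μG : Measure G) [μG.IsHaarMeasure] {A : Set G} (hA : MeasurableSet A) (hAμ : μG A < ⊤) :
    μ (A ×ˢ K) < ⊤ := by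
  have := isFiniteMeasureOnCompacts_fst_restrict_univ_prod μ K hK
  rw [← fst_restrict_univ_prod_apply μ K hA,
    isMulLeftInvariant_eq_smul (μ.restrict (univ ×ˢ K)).fst μG]
  exact ENNReal.mul_lt_top ENNReal.coe_lt_top hAμ

end MeasureTheory.Measure

theorem statement12_general {G H : Type*}
    [Group G] [TopologicalSpace G] [IsTopologicalGroup G]
    [LocallyCompactSpace G] [SecondCountableTopology G]
    [MeasurableSpace G] [BorelSpace G]
    [Group H] [TopologicalSpace H] [IsTopologicalGroup H]
    [MeasurableSpace H] [BorelSpace H]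
    (Γ : Subgroup (G × H))
    (hdense : Dense (Prod.snd '' (Γ : Set (G × H))))
    (μG : Measure G) [μG.IsHaarMeasure]
    (W₀ : Set H) (hW₀c : IsCompact W₀) (hW₀n : W₀ ∈ nhds (1 : H))
    (F : Set G) (hF : μG F < ⊤)
    (hcover : F * (Prod.fst '' ((Γ : Set (G × H)) ∩ (Set.univ ×ˢ W₀))) = Set.univ)
    (μ : Measure (G × H)) [μ.IsHaarMeasure] :
    ∃ D : Set (G × H), MeasurableSet D ∧ μ D < ⊤ ∧ D * (Γ : Set (G × H)) = Set.univ := by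
  set K := closure (W₀ * W₀⁻¹)
  have hK : IsCompact K := (hW₀c.mul hW₀c.inv).closure
  set F' := toMeasurable μG F
  have hF' : μG F' < ⊤ := by rwa [measure_toMeasurable]
  refine ⟨F' ×ˢ K, (measurableSet_toMeasurable μG F).prod isClosed_closure.measurableSet,
    μ.measure_prod_lt_top K hK μG (measurableSet_toMeasurable μG F) hF', ?_⟩
  rw [← univ_subset_iff, ← prod_mul_subgroup_eq_univ_of_dense_snd Γ hdense hW₀n hcover]
  exact mul_subset_mul_right (prod_mono (subset_toMeasurable μG F) subset_closure)

/-- if a discrete subgroup `Γ ≤ G × H` projects densely to `H`, `G` is unimodular,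
and there is a set `F ⊆ G` of finite Haar measure with `F · p_G(Γ ∩ (G × W₀)) = G` for some
compact identity neighbourhood `W₀ ⊆ H`, then `Γ` is a lattice in `G × H`. -/
theorem statement12 {G H : Type*}
    [Group G] [TopologicalSpace G] [IsTopologicalGroup G]
    [LocallyCompactSpace G] [SecondCountableTopology G]
    [MeasurableSpace G] [BorelSpace G]
    [Group H] [TopologicalSpace H] [IsTopologicalGroup H]
    [LocallyCompactSpace H] [SecondCountableTopology H]
    [MeasurableSpace H] [BorelSpace H]
    (Γ : Subgroup (G × H)) [DiscreteTopology Γ]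
    (hdense : Dense (Prod.snd '' (Γ : Set (G × H))))
    (μG : Measure G) [μG.IsHaarMeasure] [μG.IsMulRightInvariant]
    (W₀ : Set H) (hW₀c : IsCompact W₀) (hW₀n : W₀ ∈ nhds (1 : H))
    (F : Set G) (hF : μG F < ⊤)
    (hcover : F * (Prod.fst '' ((Γ : Set (G × H)) ∩ (Set.univ ×ˢ W₀))) = Set.univ)
    (μ : Measure (G × H)) [μ.IsHaarMeasure] :
    ∃ D : Set (G × H), MeasurableSet D ∧ μ D < ⊤ ∧ D * (Γ : Set (G × H)) = Set.univ :=
  statement12_general Γ hdense μG W₀ hW₀c hW₀n F hF hcover μ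
end

section
/- Let G and H be locally compact second countable groups, let X be a compact metric space with a continuous G-action and let ν be a G-invariant ergodic Borel probability measure on X. Let α : G × X → H be a Borel cocycle taking values in a subset A ⊆ H, let B ⊆ H be another subset, and suppose there is a Borel map φ : X → H such that for all g ∈ G and ν-almost every x ∈ X one has φ(gx) ∈ α(g, x)·φ(x)·B. Then there is h ∈ H such that for every neighbourhood V of the identity in H one has φ(x) ∈ A·V·h·B⁻¹ for ν-almost every x ∈ X. -/
open scoped Pointwise ENNReal NNReal
open MeasureTheory

/-!
Pick `h` in the support of `φ_* ν` and an open `U ∋ 1`, so that `P = φ⁻¹(U h)` is not null.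
Since `φ(x) ∈ α(g,x)⁻¹ φ(gx) B⁻¹` and `α(g,x)⁻¹ = α(g⁻¹,gx) ∈ A`, the set `S = φ⁻¹(A U h B⁻¹)`
contains every translate `g⁻¹ P` up to a null set. The points whose orbit meets `P` in a set of
positive right Haar measure form an exactly `G`-invariant measurable set which, by Fubini, is
not null and lies in `S` up to a null set; ergodicity makes it conull, hence `S` is conull.
-/

section Cocycle

variable {G X H : Type*} [Group G] [MulAction G X] [Group H]

def IsCocycle (α : G → X → H) : Prop :=
  ∀ (g h : G) (x : X), α (g * h) x = α g (h • x) * α h x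

theorem IsCocycle.apply_one {α : G → X → H} (hα : IsCocycle α) (x : X) : α 1 x = 1 := by
  simpa using hα 1 1 x

theorem IsCocycle.apply_inv_smul {α : G → X → H} (hα : IsCocycle α) (g : G) (x : X) :
    α g⁻¹ (g • x) = (α g x)⁻¹ := by
  have h := hα g⁻¹ g x
  rw [inv_mul_cancel, hα.apply_one] at h
  exact eq_inv_of_mul_eq_one_left h.symm

end Cocycle

theorem Set.mem_mul_mul_inv_of_mem_singleton_mul_singleton_mul {H : Type*} [Group H]
    {a y z : H} {A U B : Set H} (h : y ∈ {a} * {z} * B) (ha : a⁻¹ ∈ A) (hy : y ∈ U) :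
    z ∈ A * U * B⁻¹ := by
  rw [Set.singleton_mul_singleton] at h
  obtain ⟨_, rfl, b, hb, rfl⟩ := h
  refine ⟨_, ⟨_, ha, _, hy, rfl⟩, b⁻¹, Set.inv_mem_inv.mpr hb, ?_⟩
  group

section VisitSet

variable {G X : Type*} [Group G] [MeasurableSpace G] [MulAction G X]

def visitSet (m : Measure G) (P : Set X) : Set X :=
  {x | m {g : G | g • x ∈ P} ≠ 0}

theorem preimage_smul_visitSet [MeasurableMul G] (m : Measure G) [m.IsMulRightInvariant]
    (P : Set X) (g : G) : (g • ·) ⁻¹' visitSet m P = visitSet m P := by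
  ext x
  have hset : {k : G | k • g • x ∈ P} = (· * g) ⁻¹' {k : G | k • x ∈ P} := by
    ext k
    simp [mul_smul]
  simp only [visitSet, Set.mem_preimage, Set.mem_ofPred, hset, measure_preimage_mul_right]

variable [MeasurableSpace X] [MeasurableSMul₂ G X] {P : Set X}

theorem measurableSet_smul_mem (hP : MeasurableSet P) :
    MeasurableSet {p : X × G | p.2 • p.1 ∈ P} :=
  (measurable_snd.smul measurable_fst) hP

theorem measurableSet_visitSet (m : Measure G) [SFinite m] (hP : MeasurableSet P) :
    MeasurableSet (visitSet m P) :=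
  measurable_measure_prodMk_left (measurableSet_smul_mem hP) (measurableSet_singleton 0).compl

variable {ν : Measure X} [SFinite ν] (m : Measure G) [SFinite m]

theorem measure_visitSet_ne_zero [SMulInvariantMeasure G X ν] [NeZero m]
    (hP : MeasurableSet P) (hνP : ν P ≠ 0) : ν (visitSet m P) ≠ 0 := by
  intro hzero
  have hnot : ∀ᵐ x ∂ν, ∀ᵐ g ∂m, g • x ∉ P :=
    (measure_eq_zero_iff_ae_notMem.mp hzero).mono fun x hx => by
      simpa [visitSet, ae_iff] using hx
  -- Fubini: almost every translate of `P` would be null, while all of them have measure `ν P`.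
  rw [Measure.ae_ae_comm (measurableSet_smul_mem hP).compl] at hnot
  have hfalse : ∀ᵐ _ ∂m, False := hnot.mono fun g hg => hνP <| by
    rw [← measure_preimage_smul ν g P]
    exact measure_eq_zero_iff_ae_notMem.mpr hg
  exact NeZero.ne m (ae_eq_bot.mp (Filter.eventually_false_iff_eq_bot.mp hfalse))

theorem ae_mem_visitSet_imp {S : Set X} (hP : MeasurableSet P) (hS : MeasurableSet S)
    (h : ∀ g : G, ∀ᵐ x ∂ν, g • x ∈ P → x ∈ S) : ∀ᵐ x ∂ν, x ∈ visitSet m P → x ∈ S := by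
  have hmeas : MeasurableSet {p : X × G | p.2 • p.1 ∈ P → p.1 ∈ S} :=
    (measurableSet_smul_mem hP).imp (measurable_fst hS)
  have hswap : ∀ᵐ x ∂ν, ∀ᵐ g ∂m, g • x ∈ P → x ∈ S :=
    (Measure.ae_ae_comm hmeas).mpr (ae_of_all m h)
  filter_upwards [hswap] with x hx hxE
  by_contra hxS
  exact hxE (by simpa [hxS, ae_iff] using hx)

theorem ae_mem_of_forall_ae_smul_mem_imp [MeasurableMul G] [SMulInvariantMeasure G X ν]
    (herg : ∀ s : Set X, MeasurableSet s → (∀ g : G, (g • ·) ⁻¹' s = s) → ν s = 0 ∨ ν sᶜ = 0)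
    [m.IsMulRightInvariant] [NeZero m] {S : Set X} (hP : MeasurableSet P) (hS : MeasurableSet S)
    (hνP : ν P ≠ 0) (h : ∀ g : G, ∀ᵐ x ∂ν, g • x ∈ P → x ∈ S) : ∀ᵐ x ∂ν, x ∈ S := by
  have hE : ∀ᵐ x ∂ν, x ∈ visitSet m P :=
    ((herg _ (measurableSet_visitSet m hP) (preimage_smul_visitSet m P)).resolve_left
      (measure_visitSet_ne_zero m hP hνP))
  filter_upwards [hE, ae_mem_visitSet_imp m hP hS h] with x hxE hES using hES hxE

end VisitSet

theorem statement17_general {G H X : Type*}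
    [Group G] [TopologicalSpace G] [IsTopologicalGroup G]
    [LocallyCompactSpace G] [SecondCountableTopology G]
    [MeasurableSpace G] [BorelSpace G]
    [Group H] [TopologicalSpace H] [IsTopologicalGroup H]
    [SecondCountableTopology H]
    [MeasurableSpace H] [BorelSpace H]
    [MetricSpace X] [MeasurableSpace X] [BorelSpace X]
    [MulAction G X] [ContinuousSMul G X]
    (ν : MeasureTheory.Measure X) [MeasureTheory.IsProbabilityMeasure ν]
    (hinv : ∀ g : G, MeasureTheory.Measure.map (fun x : X => g • x) ν = ν)
    (herg : ∀ s : Set X, MeasurableSet s → (∀ g : G, (fun x : X => g • x) ⁻¹' s = s) →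
      ν s = 0 ∨ ν sᶜ = 0)
    (α : G → X → H)
    (hα_cocycle : ∀ (g h : G) (x : X), α (g * h) x = α g (h • x) * α h x)
    (A B : Set H) (hA : ∀ (g : G) (x : X), α g x ∈ A)
    (φ : X → H) (hφ : Measurable φ)
    (heq : ∀ g : G, ∀ᵐ x ∂ν, φ (g • x) ∈ ({α g x} : Set H) * {φ x} * B) :
    ∃ h : H, ∀ V ∈ nhds (1 : H), ∀ᵐ x ∂ν, φ x ∈ A * V * ({h} : Set H) * B⁻¹ := by
  have : SMulInvariantMeasure G X ν := ((smulInvariantMeasure_tfae G ν).out 0 5).mpr hinv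
  obtain ⟨h₀, hh₀⟩ := (ν.map φ).nonempty_support
    ((Measure.map_ne_zero_iff hφ.aemeasurable).mpr (IsProbabilityMeasure.ne_zero ν))
  refine ⟨h₀, fun V hV => ?_⟩
  obtain ⟨U, hUV, hU, h1U⟩ := mem_nhds_iff.mp hV
  have hUh₀ : IsOpen (U * {h₀}) := hU.mul_right
  have hνP : ν (φ ⁻¹' (U * {h₀})) ≠ 0 := by
    rw [← Measure.map_apply hφ hUh₀.measurableSet]
    exact ((Measure.mem_support_iff_forall h₀).mp hh₀ _
      (hUh₀.mem_nhds ⟨1, h1U, h₀, rfl, one_mul h₀⟩)).ne'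
  have hA_inv : ∀ (g : G) (x : X), (α g x)⁻¹ ∈ A := fun g x =>
    IsCocycle.apply_inv_smul hα_cocycle g x ▸ hA g⁻¹ (g • x)
  have hS : ∀ᵐ x ∂ν, φ x ∈ A * (U * {h₀}) * B⁻¹ :=
    ae_mem_of_forall_ae_smul_mem_imp (Measure.haar : Measure G).inv herg
      (hφ hUh₀.measurableSet) (hφ hU.mul_right.mul_left.mul_right.measurableSet) hνP
      fun g => (heq g).mono fun x hx =>
        Set.mem_mul_mul_inv_of_mem_singleton_mul_singleton_mul hx (hA_inv g x)
  filter_upwards [hS] with x hx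
  rw [← mul_assoc] at hx
  exact Set.mul_subset_mul_right (Set.mul_subset_mul_right (Set.mul_subset_mul_left hUV)) hx

/-- the cohomology reduction lemma.  If a Borel map `φ : X → H` satisfies
`φ(gx) ∈ α(g,x)·φ(x)·B` a.e. for a Borel cocycle `α` with values in `A`, over an ergodic
invariant probability measure, then there is `h ∈ H` with `φ(x) ∈ A·V·h·B⁻¹` a.e., for every
identity neighbourhood `V` of `H`. -/
theorem statement17 {G H X : Type*}
    [Group G] [TopologicalSpace G] [IsTopologicalGroup G]
    [LocallyCompactSpace G] [SecondCountableTopology G]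
    [MeasurableSpace G] [BorelSpace G]
    [Group H] [TopologicalSpace H] [IsTopologicalGroup H]
    [LocallyCompactSpace H] [SecondCountableTopology H]
    [MeasurableSpace H] [BorelSpace H]
    [MetricSpace X] [CompactSpace X] [MeasurableSpace X] [BorelSpace X]
    [MulAction G X] [ContinuousSMul G X]
    (ν : MeasureTheory.Measure X) [MeasureTheory.IsProbabilityMeasure ν]
    (hinv : ∀ g : G, MeasureTheory.Measure.map (fun x : X => g • x) ν = ν)
    (herg : ∀ s : Set X, MeasurableSet s → (∀ g : G, (fun x : X => g • x) ⁻¹' s = s) →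
      ν s = 0 ∨ ν sᶜ = 0)
    (α : G → X → H)
    (hα_meas : Measurable fun p : G × X => α p.1 p.2)
    (hα_cocycle : ∀ (g h : G) (x : X), α (g * h) x = α g (h • x) * α h x)
    (A B : Set H) (hA : ∀ (g : G) (x : X), α g x ∈ A)
    (φ : X → H) (hφ : Measurable φ)
    (heq : ∀ g : G, ∀ᵐ x ∂ν, φ (g • x) ∈ ({α g x} : Set H) * {φ x} * B) :
    ∃ h : H, ∀ V ∈ nhds (1 : H), ∀ᵐ x ∂ν, φ x ∈ A * V * ({h} : Set H) * B⁻¹ :=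
  statement17_general ν hinv herg α hα_cocycle A B hA φ hφ heq
end

section
/- Let Λ be an approximate subgroup of some group, let Λ^∞ be the subgroup it generates, let (π, ℋ_π) be a unitary representation of Λ^∞ on a Hilbert space ℋ_π, and let ξ ∈ ℋ_π. The following are equivalent: (1) for every δ > 0 there is an approximate subgroup Λ(δ, ξ) contained in and commensurable to Λ² such that ‖π(λ)ξ − ξ‖ < δ for all λ ∈ Λ(δ, ξ); (2) the set π(Λ)ξ = {π(λ)ξ : λ ∈ Λ} is totally bounded in ℋ_π; (3) there is a closed π-invariant subspace ℋ_σ ⊆ ℋ_π containing ξ such that, denoting by σ the restriction of π to ℋ_σ, the set σ(Λ) is relatively compact in the unitary group U(ℋ_σ) with the strong operator topology. -/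
open scoped Pointwise ENNReal NNReal
open MeasureTheory

/-!
(1) ⇒ (2): if `Λ ⊆ F Λ(δ, ξ)` with `F` finite, every `π(λ)ξ` is `δ`-close to a point of the
finite set `π(F)ξ`. (2) ⇒ (1): cover `π(Λ)ξ` by finitely many `δ`-balls centred at points `π(f)ξ`
with `f` in a finite `F ⊆ Λ`; then `Λ ⊆ F Λ(δ, ξ)` for `Λ(δ, ξ) = {λ ∈ Λ⁻¹Λ : ‖π(λ)ξ - ξ‖ < δ}`,
and a symmetric `X ∋ 1` inside `Λ²` with `Λ ⊆ F X` is an approximate subgroup commensurable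
with `Λ²`.

(2) ⇒ (3): the vectors with totally bounded `Λ`-orbit form a closed subspace, invariant under
`Λ^∞` because `Λ g ⊆ F Λ` for every `g ∈ Λ^∞`; so it contains the cyclic subspace `ℋ_σ` of `ξ`.
By Tychonoff `σ(Λ)` is relatively compact for pointwise convergence, and its limit points are
unitary: linearity and isometry pass to pointwise limits, and a limit point of the inverses
`σ(λ⁻¹)` is a right inverse, since composition is jointly continuous on isometries.
(3) ⇒ (2): evaluate at `ξ`.
-/

open Set

section ApproxSubgroup

variable {G : Type*} [Group G] {Λ X F : Set G}

lemma IsApproxSubgroup.inv_mem (hΛ : IsApproxSubgroup Λ) {g : G} (hg : g ∈ Λ) : g⁻¹ ∈ Λ := by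
  rw [← hΛ.2.1]
  exact Set.inv_mem_inv.2 hg

lemma IsApproxSubgroup.exists_finite_mul_singleton_subset (hΛ : IsApproxSubgroup Λ) {g : G}
    (hg : g ∈ Subgroup.closure Λ) : ∃ F : Set G, F.Finite ∧ Λ * {g} ⊆ F * Λ := by
  obtain ⟨F₂, hF₂, hΛΛ⟩ := hΛ.2.2
  have step : ∀ x y, y ∈ Λ → (∃ F : Set G, F.Finite ∧ Λ * {x} ⊆ F * Λ) →
      ∃ F : Set G, F.Finite ∧ Λ * {x * y} ⊆ F * Λ := by
    rintro x y hy ⟨F, hF, hx⟩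
    refine ⟨F * F₂, hF.mul hF₂, ?_⟩
    calc Λ * {x * y} = Λ * {x} * {y} := by rw [← singleton_mul_singleton, mul_assoc]
      _ ⊆ F * Λ * {y} := mul_subset_mul_right hx
      _ ⊆ F * (Λ * Λ) := by rw [mul_assoc]; gcongr; exact singleton_subset_iff.2 hy
      _ ⊆ F * F₂ * Λ := by rw [mul_assoc]; gcongr
  induction hg using Subgroup.closure_induction_right with
  | one => exact ⟨{1}, finite_singleton 1, by simp⟩
  | mul_right x _ y hy ih => exact step x y hy ih
  | mul_inv_cancel x _ y hy ih => exact step x y⁻¹ (hΛ.inv_mem hy) ih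

lemma IsApproxSubgroup.preimage_subtype (hΛ : IsApproxSubgroup Λ) {H : Subgroup G}
    (hΛH : Λ ⊆ H) : IsApproxSubgroup (((↑) : H → G) ⁻¹' Λ) := by
  obtain ⟨hone, hinv, F, hF, hΛΛ⟩ := hΛ
  refine ⟨hone, ?_, (↑) ⁻¹' F, hF.preimage Subtype.val_injective.injOn, ?_⟩
  · ext γ
    simp only [Set.mem_inv, mem_preimage, InvMemClass.coe_inv]
    rw [← Set.mem_inv, hinv]
  · rintro _ ⟨a, ha, b, hb, rfl⟩
    obtain ⟨f, hf, c, hc, hfc⟩ := hΛΛ (mul_mem_mul ha hb)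
    have hfH : f ∈ H := by
      rw [eq_mul_inv_of_mul_eq hfc]
      exact H.mul_mem (H.mul_mem a.2 b.2) (H.inv_mem (hΛH hc))
    exact ⟨⟨f, hfH⟩, hf, ⟨c, hΛH hc⟩, hc, Subtype.ext hfc⟩

lemma isApproxSubgroup_of_subset_sq (hΛ : IsApproxSubgroup Λ) (hX₁ : (1 : G) ∈ X)
    (hXinv : X⁻¹ = X) (hXΛ : X ⊆ Λ * Λ) (hF : F.Finite) (hΛX : Λ ⊆ F * X) :
    IsApproxSubgroup X := by
  obtain ⟨-, -, F₂, hF₂, hΛΛ⟩ := hΛ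
  refine ⟨hX₁, hXinv, F₂ * F₂ * F₂ * F, ((hF₂.mul hF₂).mul hF₂).mul hF, ?_⟩
  calc X * X ⊆ Λ ^ 4 := by rw [pow_succ, pow_three', mul_assoc (Λ * Λ)]; gcongr
    _ ⊆ F₂ ^ 3 * Λ := pow_subset_pow_mul_of_sq_subset_mul (by rwa [sq]) (by norm_num)
    _ ⊆ F₂ * F₂ * F₂ * F * X := by rw [pow_three', mul_assoc _ F]; gcongr

lemma areCommensurable_sq_of_subset_sq (hΛ : IsApproxSubgroup Λ) (hXΛ : X ⊆ Λ * Λ)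
    (hF : F.Finite) (hΛX : Λ ⊆ F * X) : AreCommensurable X (Λ * Λ) := by
  obtain ⟨-, -, F₂, hF₂, hΛΛ⟩ := hΛ
  refine ⟨{1} ∪ F₂ * F, (finite_singleton 1).union (hF₂.mul hF), ?_, ?_⟩
  · calc X ⊆ {1} * (Λ * Λ) := by rwa [singleton_one, one_mul]
      _ ⊆ ({1} ∪ F₂ * F) * (Λ * Λ) := by gcongr; exact subset_union_left
  · calc Λ * Λ ⊆ F₂ * (F * X) := hΛΛ.trans (mul_subset_mul_left hΛX)
      _ ⊆ ({1} ∪ F₂ * F) * X := by rw [← mul_assoc]; gcongr; exact subset_union_right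

end ApproxSubgroup

section Orbits

variable {G : Type*} [Group G]
variable {𝕜 : Type*} [NormedField 𝕜] {E : Type*} [NormedAddCommGroup E] [NormedSpace 𝕜 E]
variable (ρ : G →* (E ≃ₗᵢ[𝕜] E)) {A : Set G}

lemma map_mul_apply (g h : G) (v : E) : ρ (g * h) v = ρ g (ρ h v) := by
  rw [map_mul]; rfl

lemma dist_apply_mul_apply (g h : G) (v : E) : dist (ρ (g * h) v) (ρ g v) = dist (ρ h v) v := by
  rw [map_mul_apply, LinearIsometryEquiv.dist_map]

lemma inv_setOf_dist_apply_lt (ξ : E) (δ : ℝ) :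
    {g | dist (ρ g ξ) ξ < δ}⁻¹ = {g | dist (ρ g ξ) ξ < δ} := by
  ext g
  rw [Set.mem_inv, mem_ofPred_eq, mem_ofPred_eq, ← dist_apply_mul_apply ρ g, mul_inv_cancel,
    map_one, dist_comm]
  rfl

variable {ρ}

lemma totallyBounded_orbit_of_forall_exists_finite {ξ : E}
    (h : ∀ ε > 0, ∃ F : Set G, F.Finite ∧ A ⊆ F * {g | dist (ρ g ξ) ξ < ε}) :
    TotallyBounded ((ρ · ξ) '' A) := by
  refine Metric.totallyBounded_iff.2 fun ε hε => ?_
  obtain ⟨F, hF, hAF⟩ := h ε hε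
  refine ⟨(ρ · ξ) '' F, hF.image _, ?_⟩
  rintro _ ⟨a, ha, rfl⟩
  obtain ⟨f, hf, b, hb, rfl⟩ := hAF ha
  exact mem_iUnion₂.2 ⟨ρ f ξ, mem_image_of_mem _ hf, by
    rw [Metric.mem_ball, dist_apply_mul_apply]; exact hb⟩

lemma TotallyBounded.exists_finite_subset_mul {ξ : E} (h : TotallyBounded ((ρ · ξ) '' A))
    {ε : ℝ} (hε : 0 < ε) :
    ∃ F ⊆ A, F.Finite ∧ A ⊆ F * (A⁻¹ * A ∩ {g | dist (ρ g ξ) ξ < ε}) := by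
  obtain ⟨F, hFA, hF, hcover⟩ := exists_subset_image_finite_and.1
    (Metric.finite_approx_of_totallyBounded h ε hε)
  refine ⟨F, hFA, hF, fun a ha => ?_⟩
  obtain ⟨_, ⟨f, hf, rfl⟩, hdist⟩ := mem_iUnion₂.1 (hcover (mem_image_of_mem _ ha))
  refine ⟨f, hf, f⁻¹ * a, ⟨mul_mem_mul (Set.inv_mem_inv.2 (hFA hf)) ha, ?_⟩,
    mul_inv_cancel_left f a⟩
  rw [mem_ofPred_eq, ← dist_apply_mul_apply ρ f, mul_inv_cancel_left]
  exact hdist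

end Orbits

section AlmostInvariance

variable {Γ : Type*} [Group Γ] {Λ : Set Γ} {H : Subgroup Γ}
variable {𝕜 : Type*} [NormedField 𝕜] {E : Type*} [NormedAddCommGroup E] [NormedSpace 𝕜 E]
variable (π : H →* (E ≃ₗᵢ[𝕜] E)) {ξ : E}

lemma totallyBounded_orbit_of_almostInvariant (hΛH : Λ ⊆ H) (hΛ₁ : (1 : Γ) ∈ Λ)
    (h : ∀ δ > (0 : ℝ), ∃ Λδ : Set Γ, IsApproxSubgroup Λδ ∧ Λδ ⊆ Λ * Λ ∧
      AreCommensurable Λδ (Λ * Λ) ∧ ∀ γ : H, (γ : Γ) ∈ Λδ → ‖π γ ξ - ξ‖ < δ) :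
    TotallyBounded ((π · ξ) '' ((↑) ⁻¹' Λ)) := by
  refine totallyBounded_orbit_of_forall_exists_finite fun ε hε => ?_
  obtain ⟨Λε, -, hsub, ⟨F, hF, -, hΛF⟩, hnorm⟩ := h ε hε
  refine ⟨(↑) ⁻¹' F, hF.preimage Subtype.val_injective.injOn, fun γ hγ => ?_⟩
  obtain ⟨f, hf, μ, hμ, hfμ⟩ := hΛF (subset_mul_left Λ hΛ₁ hγ)
  have hμH : μ ∈ H := by
    obtain ⟨a, ha, b, hb, hab⟩ := hsub hμ
    exact hab ▸ H.mul_mem (hΛH ha) (hΛH hb)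
  refine ⟨γ * ⟨μ, hμH⟩⁻¹, ?_, ⟨μ, hμH⟩, ?_, inv_mul_cancel_right _ _⟩
  · change (γ : Γ) * μ⁻¹ ∈ F
    rwa [← hfμ, mul_inv_cancel_right]
  · rw [mem_ofPred_eq, dist_eq_norm]
    exact hnorm _ hμ

lemma almostInvariant_of_totallyBounded_orbit (hΛ : IsApproxSubgroup Λ) (hΛH : Λ ⊆ H)
    (h : TotallyBounded ((π · ξ) '' ((↑) ⁻¹' Λ))) {δ : ℝ} (hδ : 0 < δ) :
    ∃ Λδ : Set Γ, IsApproxSubgroup Λδ ∧ Λδ ⊆ Λ * Λ ∧ AreCommensurable Λδ (Λ * Λ) ∧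
      ∀ γ : H, (γ : Γ) ∈ Λδ → ‖π γ ξ - ξ‖ < δ := by
  obtain ⟨F, -, hF, hAF⟩ := h.exists_finite_subset_mul hδ
  set A : Set H := (↑) ⁻¹' Λ
  set B := A⁻¹ * A ∩ {g | dist (π g ξ) ξ < δ} with hB
  have hA : H.subtype '' A = Λ := image_preimage_eq_of_subset (by simpa using hΛH)
  have hB₁ : (1 : H) ∈ B :=
    ⟨⟨1, by simpa [A] using hΛ.1, 1, hΛ.1, one_mul (1 : H)⟩, by simpa using hδ⟩
  have hBinv : B⁻¹ = B := by
    rw [hB, inter_inv, mul_inv_rev, inv_inv, inv_setOf_dist_apply_lt]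
  have hBΛ : H.subtype '' B ⊆ Λ * Λ :=
    calc H.subtype '' B ⊆ H.subtype '' (A⁻¹ * A) := image_mono inter_subset_left
      _ = Λ * Λ := by rw [image_mul, image_inv, hA, hΛ.2.1]
  have hΛB : Λ ⊆ H.subtype '' F * H.subtype '' B := by
    rw [← image_mul, ← hA]
    exact image_mono hAF
  have hFfin := hF.image H.subtype
  refine ⟨H.subtype '' B, isApproxSubgroup_of_subset_sq hΛ ⟨1, hB₁, rfl⟩
      (by rw [← image_inv, hBinv]) hBΛ hFfin hΛB, hBΛ,
    areCommensurable_sq_of_subset_sq hΛ hBΛ hFfin hΛB, ?_⟩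
  rintro γ ⟨β, hβ, hβγ⟩
  rw [← Subtype.ext hβγ, ← dist_eq_norm]
  exact hβ.2

end AlmostInvariance

section TotallyBoundedOrbits

variable {G : Type*} [Group G]
variable {𝕜 : Type*} [NormedField 𝕜] {E : Type*} [NormedAddCommGroup E] [NormedSpace 𝕜 E]
variable {ρ : G →* (E ≃ₗᵢ[𝕜] E)} {A : Set G} {ξ : E}

variable (ρ A) in
def totallyBoundedOrbits [CompleteSpace E] : Submodule 𝕜 E where
  carrier := {v | TotallyBounded ((ρ · v) '' A)}
  zero_mem' := (totallyBounded_singleton 0).subset (by simp)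
  add_mem' {u v} hu hv := by
    refine ((hu.closure.isCompact_of_isClosed isClosed_closure).add
      (hv.closure.isCompact_of_isClosed isClosed_closure)).totallyBounded.subset ?_
    rintro _ ⟨g, hg, rfl⟩
    exact ⟨ρ g u, subset_closure ⟨g, hg, rfl⟩, ρ g v, subset_closure ⟨g, hg, rfl⟩,
      (map_add _ _ _).symm⟩
  smul_mem' c v hv := by
    refine (hv.image (uniformContinuous_const_smul c)).subset ?_
    rintro _ ⟨g, hg, rfl⟩
    exact ⟨ρ g v, ⟨g, hg, rfl⟩, (map_smul _ _ _).symm⟩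

variable (ρ ξ) in
def cyclicSubspace : Submodule 𝕜 E :=
  (Submodule.span 𝕜 (range (ρ · ξ))).topologicalClosure

lemma mem_cyclicSubspace_self : ξ ∈ cyclicSubspace ρ ξ :=
  Submodule.le_topologicalClosure _ (Submodule.subset_span ⟨1, by simp⟩)

lemma isClosed_cyclicSubspace : IsClosed (cyclicSubspace ρ ξ : Set E) :=
  Submodule.isClosed_topologicalClosure _

lemma apply_mem_cyclicSubspace (g : G) {v : E} (hv : v ∈ cyclicSubspace ρ ξ) :
    ρ g v ∈ cyclicSubspace ρ ξ := by
  have hspan : Submodule.span 𝕜 (range (ρ · ξ)) ≤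
      (cyclicSubspace ρ ξ).comap ((ρ g).toLinearEquiv : E →ₗ[𝕜] E) := by
    refine Submodule.span_le.2 ?_
    rintro _ ⟨h, rfl⟩
    exact Submodule.le_topologicalClosure _ (Submodule.subset_span ⟨g * h, map_mul_apply ρ g h ξ⟩)
  exact Submodule.topologicalClosure_minimal _ hspan
    (isClosed_cyclicSubspace.preimage (ρ g).continuous) hv

variable [CompleteSpace E]

lemma isClosed_totallyBoundedOrbits : IsClosed (totallyBoundedOrbits ρ A : Set E) := by
  refine isClosed_of_closure_subset fun v hv => Metric.totallyBounded_iff.2 fun ε hε => ?_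
  obtain ⟨w, hw, hvw⟩ := Metric.mem_closure_iff.1 hv (ε / 2) (half_pos hε)
  obtain ⟨t, ht, hcover⟩ := Metric.totallyBounded_iff.1 hw (ε / 2) (half_pos hε)
  refine ⟨t, ht, ?_⟩
  rintro _ ⟨g, hg, rfl⟩
  obtain ⟨y, hy, hwy⟩ := mem_iUnion₂.1 (hcover ⟨g, hg, rfl⟩)
  refine mem_iUnion₂.2 ⟨y, hy, ?_⟩
  calc dist (ρ g v) y ≤ dist (ρ g v) (ρ g w) + dist (ρ g w) y := dist_triangle _ _ _
    _ < ε / 2 + ε / 2 := by rw [LinearIsometryEquiv.dist_map]; exact add_lt_add hvw hwy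
    _ = ε := add_halves ε

lemma apply_mem_totallyBoundedOrbits (hA : IsApproxSubgroup A) {g : G}
    (hg : g ∈ Subgroup.closure A) {v : E} (hv : v ∈ totallyBoundedOrbits ρ A) :
    ρ g v ∈ totallyBoundedOrbits ρ A := by
  obtain ⟨F, hF, hAg⟩ := hA.exists_finite_mul_singleton_subset hg
  refine ((totallyBounded_biUnion hF).2 fun f _ =>
    TotallyBounded.image hv (ρ f).isometry.uniformContinuous).subset ?_
  rintro _ ⟨a, ha, rfl⟩
  obtain ⟨f, hf, b, hb, hfb⟩ := hAg (mul_mem_mul ha rfl)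
  refine mem_iUnion₂.2 ⟨f, hf, ρ b v, ⟨b, hb, rfl⟩, ?_⟩
  change ρ f (ρ b v) = ρ a (ρ g v)
  rw [← map_mul_apply, ← map_mul_apply]
  exact congrArg (ρ · v) hfb

lemma cyclicSubspace_le_totallyBoundedOrbits (hA : IsApproxSubgroup A)
    (hgen : Subgroup.closure A = ⊤) (hξ : TotallyBounded ((ρ · ξ) '' A)) :
    cyclicSubspace ρ ξ ≤ totallyBoundedOrbits ρ A := by
  refine Submodule.topologicalClosure_minimal _ (Submodule.span_le.2 ?_)
    isClosed_totallyBoundedOrbits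
  rintro _ ⟨g, rfl⟩
  exact apply_mem_totallyBoundedOrbits hA (hgen ▸ Subgroup.mem_top g) hξ

end TotallyBoundedOrbits

section Restriction

variable {G : Type*} [Group G]
variable {𝕜 : Type*} [NormedField 𝕜] {E : Type*} [NormedAddCommGroup E] [NormedSpace 𝕜 E]
variable {ρ : G →* (E ≃ₗᵢ[𝕜] E)} {S : Submodule 𝕜 E}

lemma map_eq_of_forall_apply_mem (hS : ∀ g, ∀ v ∈ S, ρ g v ∈ S) (g : G) :
    S.map ((ρ g : E ≃ₗᵢ[𝕜] E) : E →ₗ[𝕜] E) = S := by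
  refine le_antisymm (Submodule.map_le_iff_le_comap.2 fun v hv => hS g v hv) fun v hv => ?_
  exact ⟨ρ g⁻¹ v, hS _ _ hv, by simp⟩

variable (ρ S) in
noncomputable def restrictRep (hS : ∀ g, ∀ v ∈ S, ρ g v ∈ S) : G →* (S ≃ₗᵢ[𝕜] S) :=
  MonoidHom.mk' (fun g => (LinearIsometryEquiv.submoduleMap S (ρ g)).trans
      (LinearIsometryEquiv.ofEq _ _ (map_eq_of_forall_apply_mem hS g)))
    fun g h => by ext v; simp

end Restriction

section UnitaryClosure

open Filter Topology

lemma tendsto_apply_apply_of_isometry {X ι : Type*} [PseudoMetricSpace X] {l : Filter ι}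
    {F G : ι → X → X} {f g : X → X} (hF : Tendsto F l (𝓝 f)) (hG : Tendsto G l (𝓝 g))
    (hiso : ∀ᶠ i in l, Isometry (F i)) (x : X) :
    Tendsto (fun i => F i (G i x)) l (𝓝 (f (g x))) := by
  have hGx := tendsto_iff_dist_tendsto_zero.1 (tendsto_pi_nhds.1 hG x)
  have hFgx := tendsto_iff_dist_tendsto_zero.1 (tendsto_pi_nhds.1 hF (g x))
  refine tendsto_iff_dist_tendsto_zero.2 <| squeeze_zero' (.of_forall fun _ => dist_nonneg)
    (hiso.mono fun i hi => ?_) (by simpa using hGx.add hFgx)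
  calc dist (F i (G i x)) (f (g x)) ≤ dist (F i (G i x)) (F i (g x)) + dist (F i (g x)) (f (g x)) :=
        dist_triangle _ _ _
    _ = dist (G i x) (g x) + dist (F i (g x)) (f (g x)) := by rw [hi.dist_eq]

lemma surjective_of_mem_closure_of_isometry {X : Type*} [MetricSpace X] {A : Set (X → X)}
    (hiso : ∀ g ∈ A, Isometry g) (hinv : ∀ g ∈ A, ∃ g' ∈ A, g ∘ g' = id)
    (hA : IsCompact (closure A)) {f : X → X} (hf : f ∈ closure A) : Function.Surjective f := by
  choose! inv hinvA hright using hinv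
  obtain ⟨U, hUA, hUf⟩ := mem_closure_iff_ultrafilter.1 hf
  obtain ⟨h, -, hUh⟩ := hA.ultrafilter_le_nhds (U.map inv)
    (le_principal_iff.2 (Ultrafilter.mem_map.2 (mem_of_superset hUA fun g hg =>
      subset_closure (hinvA g hg))))
  refine fun v => ⟨h v, tendsto_nhds_unique
    (tendsto_apply_apply_of_isometry hUf hUh (mem_of_superset hUA hiso) v) ?_⟩
  exact tendsto_const_nhds.congr' (mem_of_superset hUA fun g hg => (congrFun (hright g hg) v).symm)

variable {𝕜 : Type*} [NormedField 𝕜] {X : Type*} [NormedAddCommGroup X] [NormedSpace 𝕜 X]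

lemma exists_linearIsometryEquiv_of_mem_closure {A : Set (X → X)}
    (hA : A ⊆ range ((⇑) : (X ≃ₗᵢ[𝕜] X) → X → X)) (hinv : ∀ g ∈ A, ∃ g' ∈ A, g ∘ g' = id)
    (hK : IsCompact (closure A)) {f : X → X} (hf : f ∈ closure A) :
    ∃ e : X ≃ₗᵢ[𝕜] X, ⇑e = f := by
  have hlin : closure A ⊆ range ((⇑) : (X →ₗ[𝕜] X) → X → X) := by
    refine closure_minimal (hA.trans ?_) (LinearMap.isClosed_range_coe _ _ _)
    rintro _ ⟨e, rfl⟩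
    exact ⟨e.toLinearEquiv.toLinearMap, rfl⟩
  have hnorm : closure A ⊆ {g | ∀ x, ‖g x‖ = ‖x‖} := by
    refine closure_minimal ?_ (by
      simp only [ofPred_forall]
      exact isClosed_iInter fun x => isClosed_eq (continuous_apply x).norm continuous_const)
    rintro _ hg
    obtain ⟨e, rfl⟩ := hA hg
    exact e.norm_map
  have hiso : ∀ g ∈ A, Isometry g := fun g hg => by
    obtain ⟨e, rfl⟩ := hA hg
    exact e.isometry
  obtain ⟨L, rfl⟩ := hlin hf
  exact ⟨.ofSurjective ⟨L, hnorm hf⟩ (surjective_of_mem_closure_of_isometry hiso hinv hK hf), rfl⟩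

lemma isCompact_closure_preimage_coe {α : Type*} [TopologicalSpace α] {p : α → Prop} {s : Set α}
    (hs : IsCompact (closure s)) (hp : ∀ x ∈ closure s, p x) :
    IsCompact (closure ((↑) ⁻¹' s : Set (Subtype p))) := by
  have hrange : closure s ⊆ range ((↑) : Subtype p → α) := by
    rwa [Subtype.range_coe_subtype]
  rw [IsEmbedding.subtypeVal.isCompact_iff,
    IsEmbedding.subtypeVal.closure_eq_preimage_closure_image,
    image_preimage_eq_of_subset (subset_closure.trans hrange), image_preimage_eq_of_subset hrange]
  exact hs

end UnitaryClosure

section UnitaryImage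

variable {G : Type*} [Group G]
variable {𝕜 : Type*} [NormedField 𝕜] {E : Type*} [NormedAddCommGroup E] [NormedSpace 𝕜 E]
variable {ρ : G →* (E ≃ₗᵢ[𝕜] E)} {A : Set G} {ξ : E}

lemma isCompact_closure_image_coe [CompleteSpace E] (hA : ∀ v, TotallyBounded ((ρ · v) '' A)) :
    IsCompact (closure ((fun g => ⇑(ρ g)) '' A)) :=
  Pi.isCompact_closure_iff.2 fun v => by
    rw [image_image]
    exact (hA v).closure.isCompact_of_isClosed isClosed_closure

lemma exists_restrict_isCompact_closure [CompleteSpace E] (hA : IsApproxSubgroup A)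
    (hgen : Subgroup.closure A = ⊤) (hξ : TotallyBounded ((ρ · ξ) '' A)) :
    ∃ S : Submodule 𝕜 E, IsClosed (S : Set E) ∧ ξ ∈ S ∧
      ∃ σ : G →* (S ≃ₗᵢ[𝕜] S), (∀ g (v : S), (σ g v : E) = ρ g v) ∧
        IsCompact (closure {u : {f : S → S // ∃ w : S ≃ₗᵢ[𝕜] S, ⇑w = f} |
          ∃ g ∈ A, ⇑(σ g) = (u : S → S)}) := by
  set S := cyclicSubspace ρ ξ
  have : CompleteSpace S := isClosed_cyclicSubspace.completeSpace_coe
  set σ := restrictRep ρ S fun g _ => apply_mem_cyclicSubspace g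
  have hσA : ∀ v : S, TotallyBounded ((σ · v) '' A) := fun v => by
    refine (totallyBounded_image_iff isUniformEmbedding_subtype_val.isUniformInducing).1 ?_
    rw [image_image]
    exact cyclicSubspace_le_totallyBoundedOrbits hA hgen hξ v.2
  have hinv : ∀ f ∈ (fun g => ⇑(σ g)) '' A, ∃ f' ∈ (fun g => ⇑(σ g)) '' A, f ∘ f' = id := by
    rintro _ ⟨g, hg, rfl⟩
    exact ⟨_, ⟨g⁻¹, hA.inv_mem hg, rfl⟩, by ext; simp⟩
  have hK := isCompact_closure_image_coe hσA
  refine ⟨S, isClosed_cyclicSubspace, mem_cyclicSubspace_self, σ, fun _ _ => rfl,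
    isCompact_closure_preimage_coe hK fun f hf => ?_⟩
  refine exists_linearIsometryEquiv_of_mem_closure ?_ hinv hK hf
  rintro _ ⟨g, -, rfl⟩
  exact ⟨σ g, rfl⟩

lemma totallyBounded_orbit_of_isCompact_closure {S : Submodule 𝕜 E} (hξ : ξ ∈ S)
    {σ : G →* (S ≃ₗᵢ[𝕜] S)} (hσ : ∀ g (v : S), (σ g v : E) = ρ g v)
    (hK : IsCompact (closure {u : {f : S → S // ∃ w : S ≃ₗᵢ[𝕜] S, ⇑w = f} |
      ∃ g ∈ A, ⇑(σ g) = (u : S → S)})) :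
    TotallyBounded ((ρ · ξ) '' A) := by
  have hev : Continuous fun u : {f : S → S // ∃ w : S ≃ₗᵢ[𝕜] S, ⇑w = f} =>
      ((u : S → S) ⟨ξ, hξ⟩ : E) :=
    continuous_subtype_val.comp ((continuous_apply _).comp continuous_subtype_val)
  refine (hK.image hev).totallyBounded.subset ?_
  rintro _ ⟨g, hg, rfl⟩
  exact ⟨⟨σ g, σ g, rfl⟩, subset_closure ⟨g, hg, rfl⟩, hσ g ⟨ξ, hξ⟩⟩

end UnitaryImage

/-- compactness criterion for the unitary image of an approximate subgroup.
For a unitary representation `π` of the group `Λ^∞` generated by an approximate subgroup `Λ`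
and a vector `ξ`, the following are equivalent: (1) approximate invariance of `ξ` along
approximate subgroups commensurable to `Λ²`; (2) total boundedness of the orbit `π(Λ)ξ`;
(3) existence of a closed invariant subspace containing `ξ` on which the restriction `σ`
satisfies that `σ(Λ)` is relatively compact in the unitary group with the strong operator
topology (realized as the topology of pointwise convergence). -/
theorem statement18 {Γ : Type*} [Group Γ] (Λ : Set Γ) (hΛ : IsApproxSubgroup Λ)
    {E : Type*} [NormedAddCommGroup E] [InnerProductSpace ℂ E] [CompleteSpace E]
    (π : Subgroup.closure Λ →* (E ≃ₗᵢ[ℂ] E)) (ξ : E) :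
    ((∀ δ > (0 : ℝ), ∃ Λδ : Set Γ, IsApproxSubgroup Λδ ∧ Λδ ⊆ Λ * Λ ∧
        AreCommensurable Λδ (Λ * Λ) ∧
        ∀ γ : Subgroup.closure Λ, (γ : Γ) ∈ Λδ → ‖π γ ξ - ξ‖ < δ) ↔
      TotallyBounded {v : E | ∃ γ : Subgroup.closure Λ, (γ : Γ) ∈ Λ ∧ π γ ξ = v}) ∧
    (TotallyBounded {v : E | ∃ γ : Subgroup.closure Λ, (γ : Γ) ∈ Λ ∧ π γ ξ = v} ↔
      ∃ S : Submodule ℂ E, IsClosed (S : Set E) ∧ ξ ∈ S ∧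
        ∃ σ : Subgroup.closure Λ →* (↥S ≃ₗᵢ[ℂ] ↥S),
          (∀ (γ : Subgroup.closure Λ) (v : ↥S), ((σ γ v : ↥S) : E) = π γ (v : E)) ∧
          IsCompact (closure {u : {f : ↥S → ↥S // ∃ w : ↥S ≃ₗᵢ[ℂ] ↥S, ⇑w = f} |
            ∃ γ : Subgroup.closure Λ, (γ : Γ) ∈ Λ ∧ ⇑(σ γ) = (u : ↥S → ↥S)})) := by
  have hA : IsApproxSubgroup (((↑) : Subgroup.closure Λ → Γ) ⁻¹' Λ) :=
    hΛ.preimage_subtype Subgroup.subset_closure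
  refine ⟨⟨totallyBounded_orbit_of_almostInvariant π Subgroup.subset_closure hΛ.1,
      fun h _ hδ => almostInvariant_of_totallyBounded_orbit π hΛ Subgroup.subset_closure h hδ⟩,
    exists_restrict_isCompact_closure hA Subgroup.closure_closure_coe_preimage, ?_⟩
  rintro ⟨S, -, hξ, σ, hσ, hK⟩
  exact totallyBounded_orbit_of_isCompact_closure hξ hσ hK
end
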